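/- arXiv:1809.02132 — 6 statements merged into one kernel-verified Lean document; each statement's English description precedes it below -/
import Mathlib

section
/- Let p > 0 and let x = (x_j) ∈ ℓ^p be such that x ∉ ℓ^q for all 0 < q < p. Then there exists an infinite set ℕ₁ = {α₁ < α₂ < ⋯} ⊆ ℕ with infinite complement such that |x_{α_l}| < 2^{-l} for all l, and the sequence (x_j)_{j∉ℕ₁} (equivalently ∑_{j∉ℕ₁} x_j e_j) still lies in ℓ^p \ ⋃_{0<q<p} ℓ^q. -/
open scoped Classical

/-- Membership in the sequence space ℓ^q: `∑ |x j|^q < ∞`. -/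
def MemSeqLp (q : ℝ) (x : ℕ → ℝ) : Prop := Summable fun j => |x j| ^ q

/-- Let `p > 0` and let `x ∈ ℓ^p` be such that `x ∉ ℓ^q` for all `0 < q < p`.  Then there is
an infinite set `ℕ₁ = {α₀ < α₁ < ⋯} ⊆ ℕ` with infinite complement such that
`|x (α l)| < 2^{-(l+1)}` for all `l`, and the sequence obtained from `x` by deleting the
coordinates in `ℕ₁` (replacing them by `0`) still lies in `ℓ^p \ ⋃_{0<q<p} ℓ^q`. -/
theorem stmt4 (p : ℝ) (hp : 0 < p) (x : ℕ → ℝ)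
    (hxp : MemSeqLp p x) (hx : ∀ q : ℝ, 0 < q → q < p → ¬ MemSeqLp q x) :
    ∃ α : ℕ → ℕ, StrictMono α ∧ (Set.range α)ᶜ.Infinite ∧
      (∀ l : ℕ, |x (α l)| < (1 / 2) ^ (l + 1)) ∧
      MemSeqLp p (fun j => if j ∈ Set.range α then 0 else x j) ∧
      (∀ q : ℝ, 0 < q → q < p →
        ¬ MemSeqLp q (fun j => if j ∈ Set.range α then 0 else x j)) := by
  -- |x j| → 0
  have h1 : Filter.Tendsto (fun j => |x j| ^ p) Filter.atTop (nhds 0) :=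
    hxp.tendsto_atTop_zero
  have htend : Filter.Tendsto (fun j => |x j|) Filter.atTop (nhds 0) := by
    have h2 := h1.rpow_const (p := p⁻¹) (Or.inr (by positivity))
    rw [Real.zero_rpow (inv_ne_zero hp.ne')] at h2
    refine h2.congr fun j => ?_
    exact Real.rpow_rpow_inv (abs_nonneg _) hp.ne'
  -- thresholds
  have hN : ∀ l : ℕ, ∃ N : ℕ, ∀ j ≥ N, |x j| < (1 / 2 : ℝ) ^ (l + 1) := by
    intro l
    have := htend.eventually_lt_const (show (0:ℝ) < (1/2) ^ (l+1) by positivity)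
    exact Filter.eventually_atTop.mp this
  choose N hNspec using hN
  -- define α
  let α : ℕ → ℕ := fun l => Nat.rec (N 0) (fun l a => max (N (l + 1)) (a + 2)) l
  have hα0 : α 0 = N 0 := rfl
  have hαsucc : ∀ l, α (l + 1) = max (N (l + 1)) (α l + 2) := fun l => rfl
  have hαN : ∀ l, N l ≤ α l := by
    intro l
    cases l with
    | zero => exact le_of_eq hα0.symm
    | succ n => rw [hαsucc]; exact le_max_left _ _
  have hgap : ∀ l, α l + 2 ≤ α (l + 1) := by
    intro l; rw [hαsucc]; exact le_max_right _ _
  have hmono : StrictMono α :=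
    strictMono_nat_of_lt_succ fun l => lt_of_lt_of_le (by omega) (hgap l)
  have hsmall : ∀ l, |x (α l)| < (1 / 2 : ℝ) ^ (l + 1) := fun l =>
    hNspec l (α l) (hαN l)
  -- complement infinite
  have hcompl : (Set.range α)ᶜ.Infinite := by
    apply Set.infinite_of_injective_forall_mem
      (f := fun l : ℕ => α l + 1)
    · intro a b hab
      have : α a = α b := by simpa using hab
      exact hmono.injective this
    · intro l
      simp only [Set.mem_compl_iff, Set.mem_range, not_exists]
      intro m hm
      rcases le_or_gt m l with h | h
      · have := hmono.monotone h; omega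
      · have h1 : α (l + 1) ≤ α m := hmono.monotone h
        have := hgap l; omega
  refine ⟨α, hmono, hcompl, hsmall, ?_, ?_⟩
  · -- MemSeqLp p of truncation
    refine Summable.of_nonneg_of_le (fun j => by positivity) (fun j => ?_) hxp
    by_cases hj : j ∈ Set.range α
    · simp [hj, Real.zero_rpow hp.ne', Real.rpow_nonneg (abs_nonneg _)]
    · simp [hj, le_refl]
  · -- still not in ℓ^q
    intro q hq hqp hsum
    -- the removed part is in ℓ^q
    have hz : Summable fun j => |(if j ∈ Set.range α then x j else 0 : ℝ)| ^ q := by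
      rw [← Function.Injective.summable_iff hmono.injective
        (f := fun j => |(if j ∈ Set.range α then x j else 0 : ℝ)| ^ q)
        (fun j hj => by simp [hj, Real.zero_rpow hq.ne'])]
      have hgeom : Summable fun l : ℕ => ((1/2 : ℝ) ^ q) ^ (l + 1) := by
        have : Summable fun l : ℕ => ((1/2 : ℝ) ^ q) ^ l :=
          summable_geometric_of_lt_one (Real.rpow_nonneg (by norm_num) q)
            (Real.rpow_lt_one (by norm_num) (by norm_num) hq)
        simpa [pow_succ, mul_comm] using this.mul_left ((1/2 : ℝ) ^ q)
      refine Summable.of_nonneg_of_le (fun l => by simp only [Function.comp]; positivity) (fun l => ?_) hgeom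
      have hmem : α l ∈ Set.range α := Set.mem_range_self l
      simp only [Function.comp, hmem, if_pos]
      calc |x (α l)| ^ q ≤ ((1/2 : ℝ) ^ (l + 1)) ^ q :=
            Real.rpow_le_rpow (abs_nonneg _) (hsmall l).le hq.le
        _ = ((1/2 : ℝ) ^ q) ^ (l + 1) := by
            rw [← Real.rpow_natCast ((1/2 : ℝ)) (l+1), ← Real.rpow_mul (by norm_num),
              mul_comm, Real.rpow_mul (by norm_num), Real.rpow_natCast]
    -- combine
    have : Summable fun j => |x j| ^ q := by
      refine (hsum.add hz).congr fun j => ?_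
      by_cases hj : j ∈ Set.range α <;>
        simp [hj, Real.zero_rpow hq.ne']
    exact hx q hq hqp this
end

section
/- For every p > 0 and every n ∈ ℕ, the set ℓ^p \ ⋃_{0<q<p} ℓ^q is (n, 𝔠)-spaceable in ℓ^p; that is, for every n-dimensional subspace W of ℓ^p with W \ {0} ⊆ ℓ^p \ ⋃_{0<q<p} ℓ^q, there exists a closed subspace W' of ℓ^p of dimension 𝔠 (the cardinality of the continuum) with W ⊆ W' and W' \ {0} ⊆ ℓ^p \ ⋃_{0<q<p} ℓ^q. -/
open Filter Topology

/-- The set `ℓ^p \ ⋃_{0<q<p} ℓ^q` inside the space of sequences. -/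
def ExoticSet (p : ℝ) : Set (ℕ → ℝ) :=
  {x | MemSeqLp p x ∧ ∀ q : ℝ, 0 < q → q < p → ¬ MemSeqLp q x}

/-- Convergence of a sequence of sequences in the ℓ^p (quasi-)metric:
`∑ |g k j - w j|^p → 0`. -/
def LpTendsto (p : ℝ) (g : ℕ → ℕ → ℝ) (w : ℕ → ℝ) : Prop :=
  Tendsto (fun k => ∑' j, |g k j - w j| ^ p) atTop (nhds 0)

/-- A submodule of sequences is closed in ℓ^p if it contains every ℓ^p-limit (lying in
ℓ^p) of its elements. -/
def LpClosed (p : ℝ) (W : Submodule ℝ (ℕ → ℝ)) : Prop :=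
  ∀ g : ℕ → ℕ → ℝ, (∀ k, g k ∈ W) → ∀ w : ℕ → ℝ, MemSeqLp p w → LpTendsto p g w → w ∈ W

/-!
Fix `x ∈ ℓ^p` lying in no `ℓ^q` with `q < p`: `x n = (2^k (k+1)^2)^(-1/p)` for
`2^k ≤ n < 2^(k+1)`, which Cauchy condensation reduces to the series `∑ 2^(k(1-s)) (k+1)^(-2s)`,
`s = q/p`. Given a finite-dimensional `W ⊆ ℓ^p`, extract indices `α` along which every element of
`W` decays geometrically, and cut `α` into infinitely many disjoint blocks `β (m, ·)`. Let `Z`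
consist of the sequences supported on the blocks and proportional to `x` on each of them.
`W + Z` is closed for coordinatewise convergence (closed plus finite-dimensional), which is weaker
than `ℓ^p` convergence, so `(W + Z) ∩ ℓ^p` is `ℓ^p`-closed. The sequences with `m`-th block
`r^m x`, `0 < r < 1`, are linearly independent elements of `Z ∩ ℓ^p`, so its dimension is `𝔠`.
Finally a nonzero `z ∈ Z` equals `a x`, `a ≠ 0`, on some block, where every `w ∈ W` lies in all
`ℓ^q`; hence `w + z ∉ ℓ^q` for `q < p`.
-/

-- Via `Memℓp`, so that it is a submodule for every `p`; it agrees with `MemSeqLp p` for `0 < p`.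
def seqLp (p : ℝ) : Submodule ℝ (ℕ → ℝ) where
  carrier := {x | Memℓp x (ENNReal.ofReal p)}
  add_mem' := Memℓp.add
  zero_mem' := zero_memℓp
  smul_mem' c _ hx := hx.const_smul c

theorem mem_seqLp {p : ℝ} (hp : 0 < p) {x : ℕ → ℝ} : x ∈ seqLp p ↔ MemSeqLp p x := by
  change Memℓp x _ ↔ _
  rw [memℓp_gen_iff (by rwa [ENNReal.toReal_ofReal hp.le]), ENNReal.toReal_ofReal hp.le]
  rfl

theorem MemSeqLp.comp_injective {q : ℝ} {y : ℕ → ℝ} (hy : MemSeqLp q y) {f : ℕ → ℕ}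
    (hf : Function.Injective f) : MemSeqLp q (y ∘ f) :=
  Summable.comp_injective hy hf

theorem memSeqLp_of_abs_le_geometric {q r : ℝ} (hq : 0 < q) (hr₀ : 0 ≤ r) (hr₁ : r < 1)
    {y : ℕ → ℝ} (hy : ∀ k, |y k| ≤ r ^ k) : MemSeqLp q y := by
  refine (summable_geometric_of_lt_one (by positivity)
    (Real.rpow_lt_one hr₀ hr₁ hq)).of_nonneg_of_le (fun k => by positivity) fun k => ?_
  rw [Real.rpow_pow_comm hr₀]
  exact Real.rpow_le_rpow (abs_nonneg _) (hy k) hq.le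

theorem le_seqLp_of_subset_exoticSet {p : ℝ} (hp : 0 < p) {W : Submodule ℝ (ℕ → ℝ)}
    (hW : (W : Set (ℕ → ℝ)) ⊆ ExoticSet p ∪ {0}) : W ≤ seqLp p := fun u hu => by
  rcases hW hu with h | h
  · exact (mem_seqLp hp).2 h.1
  · rw [h]
    exact zero_mem _

theorem ne_zero_of_mem_exoticSet {p : ℝ} (hp : 0 < p) {x : ℕ → ℝ} (hx : x ∈ ExoticSet p) :
    x ≠ 0 := by
  rintro rfl
  exact hx.2 (p / 2) (by positivity) (by linarith) ((mem_seqLp (by positivity)).1 (zero_mem _))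

theorem tendsto_zero_of_tendsto_abs_rpow {ι : Type*} {l : Filter ι} {p : ℝ} (hp : 0 < p)
    {f : ι → ℝ} (h : Tendsto (fun i => |f i| ^ p) l (𝓝 0)) : Tendsto f l (𝓝 0) := by
  have := h.rpow_const (p := p⁻¹) (Or.inr (by positivity))
  rw [Real.zero_rpow (by positivity)] at this
  refine (tendsto_zero_iff_abs_tendsto_zero _).2 (this.congr fun i => ?_)
  rw [← Real.rpow_mul (abs_nonneg _), mul_inv_cancel₀ hp.ne', Real.rpow_one]
  rfl

theorem LpTendsto.tendsto {p : ℝ} (hp : 0 < p) {g : ℕ → ℕ → ℝ} {w : ℕ → ℝ}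
    (hg : ∀ k, MemSeqLp p (g k - w)) (h : LpTendsto p g w) : Tendsto g atTop (𝓝 w) := by
  refine tendsto_pi_nhds.2 fun j => tendsto_sub_nhds_zero_iff.1 ?_
  exact tendsto_zero_of_tendsto_abs_rpow hp <| squeeze_zero (fun k => by positivity)
    (fun k => (hg k).le_tsum j fun i _ => by positivity) h

theorem lpClosed_inf_seqLp {p : ℝ} (hp : 0 < p) {V : Submodule ℝ (ℕ → ℝ)}
    (hV : IsClosed (V : Set (ℕ → ℝ))) : LpClosed p (V ⊓ seqLp p) := by
  intro g hg w hw hlim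
  have hgw : ∀ k, MemSeqLp p (g k - w) := fun k =>
    (mem_seqLp hp).1 (sub_mem (hg k).2 ((mem_seqLp hp).2 hw))
  exact ⟨hV.mem_of_tendsto (hlim.tendsto hp hgw) (Eventually.of_forall fun k => (hg k).1),
    (mem_seqLp hp).2 hw⟩

noncomputable def dyadicWeight (k : ℕ) : ℝ := ((2 : ℝ) ^ k * ((k : ℝ) + 1) ^ 2)⁻¹

theorem dyadicWeight_pos (k : ℕ) : 0 < dyadicWeight k := by
  unfold dyadicWeight
  positivity

theorem antitone_dyadicWeight : Antitone dyadicWeight := fun m n hmn => by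
  unfold dyadicWeight
  gcongr
  norm_num

theorem summable_dyadicWeight_log_rpow_iff {s : ℝ} (hs : 0 ≤ s) :
    (Summable fun n => dyadicWeight (Nat.log 2 n) ^ s) ↔
      Summable fun k => (2 : ℝ) ^ k * dyadicWeight k ^ s := by
  rw [← summable_condensed_iff_of_nonneg (fun n => Real.rpow_nonneg (dyadicWeight_pos _).le s)]
  · simp [Nat.log_pow]
  · intro m n _ hmn
    exact Real.rpow_le_rpow (dyadicWeight_pos _).le
      (antitone_dyadicWeight (Nat.log_mono_right hmn)) hs

theorem summable_two_pow_mul_dyadicWeight :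
    Summable fun k => (2 : ℝ) ^ k * dyadicWeight k ^ (1 : ℝ) := by
  have : Summable fun k : ℕ => 1 / ((k : ℝ) + 1) ^ 2 := by
    simpa using (summable_nat_add_iff 1).2 (Real.summable_one_div_nat_pow.2 one_lt_two)
  refine this.congr fun k => ?_
  simp only [dyadicWeight, Real.rpow_one]
  field_simp

theorem not_summable_two_pow_mul_dyadicWeight_rpow {s : ℝ} (hs : s < 1) :
    ¬ Summable fun k => (2 : ℝ) ^ k * dyadicWeight k ^ s := by
  set r : ℝ := 2 / 2 ^ s
  have hr : 1 < r := by
    rw [one_lt_div (by positivity)]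
    simpa using Real.rpow_lt_rpow_of_exponent_lt one_lt_two hs
  set a : ℕ → ℝ := fun k => (2 : ℝ) ^ k * dyadicWeight k ^ s
  have ha : ∀ k, 0 < a k := fun k => by
    have := dyadicWeight_pos k
    positivity
  have hbound : ∀ k, (a k)⁻¹ ≤ ((k : ℝ) + 1) ^ 2 / r ^ k := by
    intro k
    have hpoly : (((k : ℝ) + 1) ^ 2) ^ s ≤ ((k : ℝ) + 1) ^ 2 := by
      simpa using Real.rpow_le_rpow_of_exponent_le
        (by nlinarith [k.cast_nonneg (α := ℝ)]) hs.le
    have hak : (a k)⁻¹ = ((2 : ℝ) ^ k) ^ s * (((k : ℝ) + 1) ^ 2) ^ s / 2 ^ k := by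
      simp only [a, dyadicWeight]
      rw [Real.inv_rpow (by positivity), Real.mul_rpow (by positivity) (by positivity)]
      field_simp
    rw [hak, div_pow, Real.rpow_pow_comm zero_le_two, div_div_eq_mul_div,
      mul_comm (((k : ℝ) + 1) ^ 2)]
    gcongr
  have hpoly : Tendsto (fun k : ℕ => ((k : ℝ) + 1) ^ 2 / r ^ k) atTop (𝓝 0) := by
    have := ((tendsto_add_atTop_iff_nat 1).2
      (tendsto_pow_const_div_const_pow_of_one_lt 2 hr)).const_mul r
    rw [mul_zero] at this
    refine this.congr fun k => ?_
    push_cast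
    field_simp
    ring
  -- the terms and their reciprocals would both tend to zero
  intro hsum
  have hinv : Tendsto (fun k => (a k)⁻¹) atTop (𝓝 0) :=
    squeeze_zero (fun k => (inv_pos.2 (ha k)).le) hbound hpoly
  have := hsum.tendsto_atTop_zero.mul hinv
  rw [mul_zero] at this
  exact one_ne_zero (tendsto_nhds_unique tendsto_const_nhds
    (this.congr fun k => mul_inv_cancel₀ (ha k).ne'))

noncomputable def dyadicSeq (p : ℝ) (n : ℕ) : ℝ := dyadicWeight (Nat.log 2 n) ^ p⁻¹

theorem dyadicSeq_mem_exoticSet {p : ℝ} (hp : 0 < p) : dyadicSeq p ∈ ExoticSet p := by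
  have habs : ∀ q, (fun n => |dyadicSeq p n| ^ q) =
      fun n => dyadicWeight (Nat.log 2 n) ^ (q / p) := fun q => funext fun n => by
    rw [dyadicSeq, abs_of_nonneg (Real.rpow_nonneg (dyadicWeight_pos _).le _),
      ← Real.rpow_mul (dyadicWeight_pos _).le, inv_mul_eq_div]
  refine ⟨?_, fun q hq hqp => ?_⟩
  · rw [MemSeqLp, habs, div_self hp.ne', summable_dyadicWeight_log_rpow_iff zero_le_one]
    exact summable_two_pow_mul_dyadicWeight
  · rw [MemSeqLp, habs, summable_dyadicWeight_log_rpow_iff (by positivity)]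
    exact not_summable_two_pow_mul_dyadicWeight_rpow ((div_lt_one hp).2 hqp)

def blockSubmodule (x : ℕ → ℝ) (β : ℕ × ℕ → ℕ) : Submodule ℝ (ℕ → ℝ) where
  carrier := {y | (∀ j ∉ Set.range β, y j = 0) ∧ ∀ m, (fun t => y (β (m, t))) ∈ ℝ ∙ x}
  add_mem' hy hz := ⟨fun j hj => by simp [hy.1 j hj, hz.1 j hj],
    fun m => add_mem (hy.2 m) (hz.2 m)⟩
  zero_mem' := ⟨fun _ _ => rfl, fun _ => zero_mem _⟩
  smul_mem' c _ hy := ⟨fun j hj => by simp [hy.1 j hj], fun m => Submodule.smul_mem _ c (hy.2 m)⟩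

theorem isClosed_blockSubmodule (x : ℕ → ℝ) (β : ℕ × ℕ → ℕ) :
    IsClosed (blockSubmodule x β : Set (ℕ → ℝ)) := by
  change IsClosed {y : ℕ → ℝ | _ ∧ _}
  simp only [Set.ofPred_and, Set.ofPred_forall]
  exact (isClosed_iInter fun j => isClosed_iInter fun _ =>
      isClosed_eq (continuous_apply j) continuous_const).inter
    (isClosed_iInter fun m => (ℝ ∙ x).closed_of_finiteDimensional.preimage
      (continuous_pi fun t => continuous_apply _))

theorem not_memSeqLp_add_of_mem_blockSubmodule {q : ℝ} (hq : 0 < q) {x : ℕ → ℝ}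
    (hx : ¬ MemSeqLp q x) {β : ℕ × ℕ → ℕ} (hβ : Function.Injective β) {u y : ℕ → ℝ}
    (hu : ∀ m, MemSeqLp q fun t => u (β (m, t))) (hy : y ∈ blockSubmodule x β) (hy0 : y ≠ 0) :
    ¬ MemSeqLp q (u + y) := by
  obtain ⟨j, hj⟩ := Function.ne_iff.1 hy0
  obtain ⟨⟨m, t⟩, rfl⟩ : j ∈ Set.range β := by_contra fun h => hj (hy.1 j h)
  obtain ⟨a, ha⟩ := Submodule.mem_span_singleton.1 (hy.2 m)
  have ha0 : a ≠ 0 := by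
    rintro rfl
    exact hj (by simpa using (congrFun ha t).symm)
  intro huy
  have hblock : (fun t => y (β (m, t))) ∈ seqLp q := by
    have huy_m : (fun t => (u + y) (β (m, t))) ∈ seqLp q :=
      (mem_seqLp hq).2 (huy.comp_injective (hβ.comp (Prod.mk_right_injective m)))
    convert sub_mem huy_m ((mem_seqLp hq).2 (hu m)) using 1
    ext
    simp
  rw [← ha] at hblock
  exact hx ((mem_seqLp hq).1 (by simpa [ha0] using Submodule.smul_mem _ a⁻¹ hblock))

theorem add_mem_exoticSet {p : ℝ} (hp : 0 < p) {x : ℕ → ℝ} (hx : x ∈ ExoticSet p)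
    {β : ℕ × ℕ → ℕ} (hβ : Function.Injective β) {u y : ℕ → ℝ} (hu : MemSeqLp p u)
    (hu_small : ∀ q, 0 < q → ∀ m, MemSeqLp q fun t => u (β (m, t)))
    (hy : y ∈ blockSubmodule x β ⊓ seqLp p) (hy0 : y ≠ 0) : u + y ∈ ExoticSet p :=
  ⟨(mem_seqLp hp).1 (add_mem ((mem_seqLp hp).2 hu) hy.2), fun q hq hqp =>
    not_memSeqLp_add_of_mem_blockSubmodule hq (hx.2 q hq hqp) hβ (hu_small q hq) hy.1 hy0⟩

theorem sup_inf_seqLp_subset_exoticSet {p : ℝ} (hp : 0 < p) {x : ℕ → ℝ} (hx : x ∈ ExoticSet p)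
    {β : ℕ × ℕ → ℕ} (hβ : Function.Injective β) {W : Submodule ℝ (ℕ → ℝ)}
    (hW : (W : Set (ℕ → ℝ)) ⊆ ExoticSet p ∪ {0})
    (hW_small : ∀ u ∈ W, ∀ q, 0 < q → ∀ m, MemSeqLp q fun t => u (β (m, t))) :
    (((blockSubmodule x β ⊔ W) ⊓ seqLp p : Submodule ℝ (ℕ → ℝ)) : Set (ℕ → ℝ)) ⊆
      ExoticSet p ∪ {0} := by
  rintro _ ⟨hv, hvp⟩
  obtain ⟨y, hy, u, hu, rfl⟩ := Submodule.mem_sup.1 hv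
  have hup : u ∈ seqLp p := le_seqLp_of_subset_exoticSet hp hW hu
  rcases eq_or_ne y 0 with rfl | hy0
  · simpa using hW hu
  · left
    rw [add_comm]
    exact add_mem_exoticSet hp hx hβ ((mem_seqLp hp).1 hup) (hW_small u hu)
      ⟨hy, by simpa using sub_mem hvp hup⟩ hy0

noncomputable def geomBlockSeq (x : ℕ → ℝ) (β : ℕ × ℕ → ℕ) (r : ℝ) : ℕ → ℝ :=
  Function.extend β (fun mt => r ^ mt.1 * x mt.2) 0

section geomBlockSeq

variable {x : ℕ → ℝ} {β : ℕ × ℕ → ℕ}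

theorem geomBlockSeq_apply (hβ : Function.Injective β) (r : ℝ) (m t : ℕ) :
    geomBlockSeq x β r (β (m, t)) = r ^ m * x t :=
  hβ.extend_apply _ _ _

theorem geomBlockSeq_of_notMem_range (r : ℝ) {j : ℕ} (hj : j ∉ Set.range β) :
    geomBlockSeq x β r j = 0 :=
  Function.extend_apply' _ _ _ (by simpa using hj)

theorem geomBlockSeq_mem_blockSubmodule (hβ : Function.Injective β) (r : ℝ) :
    geomBlockSeq x β r ∈ blockSubmodule x β :=
  ⟨fun _ hj => geomBlockSeq_of_notMem_range r hj, fun m =>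
    Submodule.mem_span_singleton.2 ⟨r ^ m, funext fun t => by simp [geomBlockSeq_apply hβ]⟩⟩

theorem geomBlockSeq_mem_seqLp {p : ℝ} (hp : 0 < p) (hx : MemSeqLp p x)
    (hβ : Function.Injective β) {r : ℝ} (hr : |r| < 1) : geomBlockSeq x β r ∈ seqLp p := by
  rw [mem_seqLp hp, MemSeqLp, ← hβ.summable_iff fun j hj => by
    simp [geomBlockSeq_of_notMem_range r hj, Real.zero_rpow hp.ne']]
  refine ((summable_geometric_of_lt_one (by positivity)
    (Real.rpow_lt_one (abs_nonneg r) hr hp)).mul_of_nonneg hx (fun _ => by positivity)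
      fun _ => by positivity).congr fun ⟨m, t⟩ => ?_
  simp only [Function.comp_apply, geomBlockSeq_apply hβ, abs_mul, abs_pow]
  rw [Real.mul_rpow (by positivity) (abs_nonneg _), Real.rpow_pow_comm (abs_nonneg r)]

theorem linearIndependent_geometric : LinearIndependent ℝ fun (r : ℝ) (n : ℕ) => r ^ n :=
  (linearIndependent_monoidHom (Multiplicative ℕ) ℝ).comp (powersHom ℝ) (powersHom ℝ).injective

theorem linearIndependent_geomBlockSeq (hx : x ≠ 0) (hβ : Function.Injective β) :
    LinearIndependent ℝ (geomBlockSeq x β) := by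
  obtain ⟨t, ht⟩ : ∃ t, x t ≠ 0 := Function.ne_iff.1 hx
  refine LinearIndependent.of_comp ((x t)⁻¹ • LinearMap.funLeft ℝ ℝ fun m => β (m, t)) ?_
  convert linearIndependent_geometric with r m
  simp only [LinearMap.smul_apply, LinearMap.funLeft_apply, Function.comp_apply,
    geomBlockSeq_apply hβ, Pi.smul_apply, smul_eq_mul]
  field_simp

theorem continuum_le_rank_blockSubmodule_inf_seqLp {p : ℝ} (hp : 0 < p) (hx : MemSeqLp p x)
    (hx0 : x ≠ 0) (hβ : Function.Injective β) :
    Cardinal.continuum ≤ Module.rank ℝ (blockSubmodule x β ⊓ seqLp p : Submodule ℝ (ℕ → ℝ)) := by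
  let v : Set.Ioo (0 : ℝ) 1 → (blockSubmodule x β ⊓ seqLp p : Submodule ℝ (ℕ → ℝ)) := fun r =>
    ⟨geomBlockSeq x β r, geomBlockSeq_mem_blockSubmodule hβ r,
      geomBlockSeq_mem_seqLp hp hx hβ (abs_lt.2 ⟨by linarith [r.2.1], r.2.2⟩)⟩
  have hv : LinearIndependent ℝ v := LinearIndependent.of_comp (Submodule.subtype _)
    ((linearIndependent_geomBlockSeq hx0 hβ).comp _ Subtype.val_injective)
  simpa [Cardinal.mk_Ioo_real] using hv.cardinal_le_rank

end geomBlockSeq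

theorem exists_strictMono_forall_memSeqLp_comp {W : Submodule ℝ (ℕ → ℝ)}
    [FiniteDimensional ℝ W] (hW : ∀ u ∈ W, Tendsto u atTop (𝓝 0)) :
    ∃ α : ℕ → ℕ, StrictMono α ∧ ∀ u ∈ W, ∀ q, 0 < q → MemSeqLp q (u ∘ α) := by
  obtain ⟨s, hs⟩ := (Submodule.fg_iff_finiteDimensional W).2 ‹_›
  obtain ⟨α, hα, hsmall⟩ := extraction_forall_of_eventually fun k =>
    s.eventually_all.2 fun w hw => ((tendsto_zero_iff_abs_tendsto_zero _).1
      (hW w (hs ▸ Submodule.subset_span hw))).eventually_le_const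
        (by positivity : (0 : ℝ) < 2⁻¹ ^ k)
  refine ⟨α, hα, fun u hu q hq => ?_⟩
  have hWq : W ≤ (seqLp q).comap (LinearMap.funLeft ℝ ℝ α) := hs ▸ Submodule.span_le.2
    fun w hw => (mem_seqLp hq).2 <|
      memSeqLp_of_abs_le_geometric hq (by norm_num) (by norm_num) fun k => hsmall k w hw
  exact (mem_seqLp hq).1 (hWq hu)

theorem rank_submodule_le_continuum (V : Submodule ℝ (ℕ → ℝ)) :
    Module.rank ℝ V ≤ Cardinal.continuum := by
  refine (Submodule.rank_le V).trans ((rank_le_card ℝ _).trans_eq ?_)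
  simp [Cardinal.mk_real, Cardinal.continuum_power_aleph0]

theorem Submodule.exists_le_rank_eq {K E : Type*} [DivisionRing K] [AddCommGroup E]
    [Module K E] (V : Submodule K E) {n : ℕ} (hn : n ≤ Module.rank K V) :
    ∃ W ≤ V, Module.rank K W = n := by
  let b := Module.Basis.ofVectorSpace K V
  obtain ⟨e⟩ : Nonempty (Fin n ↪ Module.Basis.ofVectorSpaceIndex K V) := by
    refine Cardinal.lift_mk_le'.1 ?_
    simpa [b.mk_eq_rank''] using hn
  have hv : LinearIndependent K fun i => (b (e i) : E) :=
    (b.linearIndependent.comp e e.injective).map' V.subtype V.ker_subtype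
  refine ⟨span K (Set.range fun i => (b (e i) : E)),
    span_le.2 (Set.range_subset_iff.2 fun i => (b (e i)).2), ?_⟩
  rw [rank_span hv]
  simpa using Cardinal.mk_range_eq_of_injective hv.injective

theorem exists_lpClosed_rank_continuum_extension {p : ℝ} (hp : 0 < p) {x : ℕ → ℝ}
    (hx : x ∈ ExoticSet p) {W : Submodule ℝ (ℕ → ℝ)} [FiniteDimensional ℝ W]
    (hW : (W : Set (ℕ → ℝ)) ⊆ ExoticSet p ∪ {0}) :
    ∃ W' : Submodule ℝ (ℕ → ℝ), W ≤ W' ∧ LpClosed p W' ∧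
      Module.rank ℝ W' = Cardinal.continuum ∧ (W' : Set (ℕ → ℝ)) ⊆ ExoticSet p ∪ {0} := by
  have hWp := le_seqLp_of_subset_exoticSet hp hW
  obtain ⟨α, hα, hα_small⟩ := exists_strictMono_forall_memSeqLp_comp fun u hu =>
    tendsto_zero_of_tendsto_abs_rpow hp ((mem_seqLp hp).1 (hWp hu)).tendsto_atTop_zero
  set β := α ∘ Nat.pairEquiv
  have hβ : Function.Injective β := hα.injective.comp Nat.pairEquiv.injective
  have hW_small : ∀ u ∈ W, ∀ q, 0 < q → ∀ m, MemSeqLp q fun t => u (β (m, t)) :=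
    fun u hu q hq m => (hα_small u hu q hq).comp_injective
      (Nat.pairEquiv.injective.comp (Prod.mk_right_injective m))
  refine ⟨(blockSubmodule x β ⊔ W) ⊓ seqLp p, le_inf le_sup_right hWp,
    lpClosed_inf_seqLp hp (Submodule.isClosed_sup_finiteDimensional _ _
      (isClosed_blockSubmodule x β)), ?_, sup_inf_seqLp_subset_exoticSet hp hx hβ hW hW_small⟩
  exact (rank_submodule_le_continuum _).antisymm
    ((continuum_le_rank_blockSubmodule_inf_seqLp hp hx.1 (ne_zero_of_mem_exoticSet hp hx) hβ).trans
      (Submodule.rank_mono (inf_le_inf_right _ le_sup_left)))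

/-- For every `p > 0` and every `n ∈ ℕ`, the set `ℓ^p \ ⋃_{0<q<p} ℓ^q` is
`(n, 𝔠)`-spaceable in `ℓ^p`: it is `n`-lineable and every `n`-dimensional subspace `W`
with `W \ {0} ⊆ ℓ^p \ ⋃_{0<q<p} ℓ^q` is contained in a closed subspace `W'` of
dimension `𝔠` with `W' \ {0} ⊆ ℓ^p \ ⋃_{0<q<p} ℓ^q`. -/
theorem stmt6 (p : ℝ) (hp : 0 < p) (n : ℕ) :
    (∃ W₀ : Submodule ℝ (ℕ → ℝ), Module.rank ℝ W₀ = n ∧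
      (W₀ : Set (ℕ → ℝ)) ⊆ ExoticSet p ∪ {0}) ∧
    ∀ W : Submodule ℝ (ℕ → ℝ), Module.rank ℝ W = n →
      (W : Set (ℕ → ℝ)) ⊆ ExoticSet p ∪ {0} →
      ∃ W' : Submodule ℝ (ℕ → ℝ), W ≤ W' ∧ LpClosed p W' ∧
        Module.rank ℝ W' = Cardinal.continuum ∧
        (W' : Set (ℕ → ℝ)) ⊆ ExoticSet p ∪ {0} := by
  have hx := dyadicSeq_mem_exoticSet hp
  refine ⟨?_, fun W hrank hW => ?_⟩
  · obtain ⟨W', -, -, hrank', hW'⟩ :=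
      exists_lpClosed_rank_continuum_extension (W := ⊥) hp hx (by simp)
    obtain ⟨W₀, hle, hrank₀⟩ := W'.exists_le_rank_eq (hrank' ▸ (Cardinal.nat_lt_continuum n).le)
    exact ⟨W₀, hrank₀, (SetLike.coe_subset_coe.2 hle).trans hW'⟩
  · have := Module.finite_of_rank_eq_nat hrank
    exact exists_lpClosed_rank_continuum_extension hp hx hW
end

section
/- For every p > 0, the set ℓ^p \ ⋃_{0<q<p} ℓ^q is not (ℵ₀, 𝔠)-spaceable in ℓ^p: there exists a countably infinite dimensional subspace W of ℓ^p with W \ {0} ⊆ ℓ^p \ ⋃_{0<q<p} ℓ^q such that no closed subspace W₁ of ℓ^p satisfies W ⊆ W₁ and W₁ \ {0} ⊆ ℓ^p \ ⋃_{0<q<p} ℓ^q. -/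
open Filter Topology

/-! ### Auxiliary construction -/

namespace Stmt7Aux

noncomputable section

/-- the block base `(m+1)^2 * 2^m`. -/
def B (m : ℕ) : ℝ := ((m : ℝ) + 1) ^ 2 * (2 : ℝ) ^ m

lemma B_pos (m : ℕ) : 0 < B m := by
  unfold B; positivity

/-- block values -/
def vb (p : ℝ) (m : ℕ) : ℝ := (B m)⁻¹ ^ (1 / p)

lemma vb_pos (p : ℝ) (m : ℕ) : 0 < vb p m :=
  Real.rpow_pos_of_pos (inv_pos.2 (B_pos m)) _

lemma vb_rpow (p e : ℝ) (m : ℕ) : vb p m ^ e = (B m)⁻¹ ^ (e / p) := by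
  unfold vb
  rw [← Real.rpow_mul (inv_nonneg.2 (B_pos m).le)]
  ring_nf

lemma vb_rpow_self (p : ℝ) (hp : 0 < p) (m : ℕ) : vb p m ^ p = (B m)⁻¹ := by
  rw [vb_rpow, div_self hp.ne', Real.rpow_one]

/-- the equivalence between `Σ m, Fin (2^m)` and `ℕ`. -/
def blockEquiv : (Σ m : ℕ, Fin (2 ^ m)) ≃ ℕ :=
  Equiv.ofBijective (fun s => 2 ^ s.1 - 1 + s.2.1) (by
    have hlog : ∀ (m i : ℕ), i < 2 ^ m → Nat.log 2 (2 ^ m - 1 + i + 1) = m := by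
      intro m i hi
      have h2 : (1 : ℕ) ≤ 2 ^ m := Nat.one_le_two_pow
      have he : 2 ^ m - 1 + i + 1 = 2 ^ m + i := by omega
      rw [he]
      exact Nat.log_eq_of_pow_le_of_lt_pow (by omega) (by have := pow_succ 2 m; omega)
    constructor
    · rintro ⟨m, i⟩ ⟨m', i'⟩ h
      simp only at h
      have hm : m = m' := by
        have h1 := hlog m i.1 i.2
        have h2 := hlog m' i'.1 i'.2
        rw [h] at h1
        exact h1.symm.trans h2
      subst hm
      have h2 : (1 : ℕ) ≤ 2 ^ m := Nat.one_le_two_pow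
      have : i = i' := Fin.ext (by omega)
      rw [this]
    · intro n
      set m := Nat.log 2 (n + 1) with hm
      have h1 : 2 ^ m ≤ n + 1 := Nat.pow_log_le_self 2 (by omega)
      have h2 : n + 1 < 2 ^ (m + 1) := Nat.lt_pow_succ_log_self (by norm_num) _
      have h3 : 2 ^ (m + 1) = 2 ^ m * 2 := pow_succ 2 m
      refine ⟨⟨m, ⟨n + 1 - 2 ^ m, by omega⟩⟩, ?_⟩
      simp only
      omega)

/-- the exotic base sequence -/
def bseq (p : ℝ) (t : ℕ) : ℝ := vb p (Nat.log 2 (t + 1))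

lemma bseq_pos (p : ℝ) (t : ℕ) : 0 < bseq p t := vb_pos _ _

lemma bseq_blockEquiv (p : ℝ) (s : Σ m : ℕ, Fin (2 ^ m)) :
    bseq p (blockEquiv s) = vb p s.1 := by
  obtain ⟨m, i⟩ := s
  have h2 : (1 : ℕ) ≤ 2 ^ m := Nat.one_le_two_pow
  have hl : Nat.log 2 (2 ^ m - 1 + i.1 + 1) = m := by
    have he : 2 ^ m - 1 + i.1 + 1 = 2 ^ m + i.1 := by omega
    rw [he]
    exact Nat.log_eq_of_pow_le_of_lt_pow (Nat.le_add_right _ _)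
      (by have := pow_succ 2 m; have := i.2; omega)
  show vb p (Nat.log 2 (2 ^ m - 1 + i.1 + 1)) = vb p m
  rw [hl]

/-- transfer of summability to block sums -/
lemma summable_bseq_iff (p e : ℝ) :
    (Summable fun t => |bseq p t| ^ e) ↔
      Summable fun m => (2 : ℝ) ^ m * vb p m ^ e := by
  rw [← Equiv.summable_iff blockEquiv]
  have hfe : ((fun t => |bseq p t| ^ e) ∘ blockEquiv) =
      fun s : Σ m : ℕ, Fin (2 ^ m) => vb p s.1 ^ e := by
    funext s
    simp only [Function.comp_apply, bseq_blockEquiv, abs_of_pos (vb_pos p s.1)]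
  rw [hfe]
  rw [summable_sigma_of_nonneg (fun s => Real.rpow_nonneg (vb_pos p s.1).le e)]
  have h2 : ∀ m : ℕ, (∑' _ : Fin (2 ^ m), vb p m ^ e) = (2 : ℝ) ^ m * vb p m ^ e := by
    intro m
    rw [tsum_fintype]
    simp [Finset.sum_const, nsmul_eq_mul]
  constructor
  · rintro ⟨-, h⟩
    exact h.congr h2
  · intro h
    exact ⟨fun m => Summable.of_finite, h.congr fun m => (h2 m).symm⟩

lemma summable_bseq_p (p : ℝ) (hp : 0 < p) : Summable fun t => |bseq p t| ^ p := by
  rw [summable_bseq_iff]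
  have : (fun m : ℕ => (2 : ℝ) ^ m * vb p m ^ p) =
      fun m : ℕ => (((m : ℝ) + 1) ^ 2)⁻¹ := by
    funext m
    rw [vb_rpow_self p hp]
    unfold B
    have h2 : ((2 : ℝ) ^ m) ≠ 0 := by positivity
    have h1 : (((m : ℝ) + 1) ^ 2) ≠ 0 := by positivity
    field_simp
  rw [this]
  have hs : Summable fun n : ℕ => 1 / (n : ℝ) ^ 2 := Real.summable_one_div_nat_pow.2 one_lt_two
  have := (summable_nat_add_iff 1).2 hs
  refine this.congr fun n => ?_
  push_cast
  rw [one_div]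

lemma not_summable_bseq_q (p q : ℝ) (hp : 0 < p) (hq : 0 < q) (hqp : q < p) :
    ¬ Summable fun t => |bseq p t| ^ q := by
  rw [summable_bseq_iff]
  intro hS
  set s : ℝ := q / p with hs
  have hs0 : 0 < s := div_pos hq hp
  have hs1 : s < 1 := (div_lt_one hp).2 hqp
  -- the terms are eventually ≥ 1
  have hev : ∀ᶠ m : ℕ in atTop, (1 : ℝ) ≤ (2 : ℝ) ^ m * vb p m ^ q := by
    set R : ℝ := (2 : ℝ) ^ (1 - s) with hR
    have hR1 : 1 < R := by
      rw [hR]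
      exact Real.one_lt_rpow_iff_of_pos two_pos |>.2 (Or.inl ⟨one_lt_two, by linarith⟩)
    have h0 := tendsto_pow_const_div_const_pow_of_one_lt 2 hR1
    have hev1 : ∀ᶠ n : ℕ in atTop, (n : ℝ) ^ 2 / R ^ n < 1 / 4 :=
      h0.eventually (eventually_lt_nhds (by norm_num))
    filter_upwards [hev1, eventually_ge_atTop 1] with m h4 hm1
    have hRm : (0 : ℝ) < R ^ m := pow_pos (lt_trans one_pos hR1) m
    have hkey : ((m : ℝ) + 1) ^ 2 ≤ R ^ m := by
      have hm1' : (1 : ℝ) ≤ (m : ℝ) := by exact_mod_cast hm1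
      have : (m : ℝ) ^ 2 < (1 / 4) * R ^ m := (div_lt_iff₀ hRm).1 h4
      nlinarith
    -- now convert to the desired form
    have hBq : vb p m ^ q = (B m ^ s)⁻¹ := by
      rw [vb_rpow, Real.inv_rpow (B_pos m).le, hs]
    have hBs : B m ^ s ≤ (2 : ℝ) ^ m := by
      have hsplit : B m ^ s = (((m : ℝ) + 1) ^ 2) ^ s * ((2 : ℝ) ^ m) ^ s := by
        unfold B
        rw [Real.mul_rpow (by positivity) (by positivity)]
      have h1le : (1 : ℝ) ≤ ((m : ℝ) + 1) ^ 2 := by nlinarith [Nat.cast_nonneg (α := ℝ) m]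
      have hA : (((m : ℝ) + 1) ^ 2) ^ s ≤ ((m : ℝ) + 1) ^ 2 := by
        calc (((m : ℝ) + 1) ^ 2) ^ s ≤ (((m : ℝ) + 1) ^ 2) ^ (1 : ℝ) :=
              Real.rpow_le_rpow_of_exponent_le h1le hs1.le
        _ = ((m : ℝ) + 1) ^ 2 := Real.rpow_one _
      have h2m : ((2 : ℝ) ^ m) ^ s = (2 : ℝ) ^ ((m : ℝ) * s) := by
        rw [← Real.rpow_natCast (2 : ℝ) m, ← Real.rpow_mul (by norm_num)]
      have h2msum : (2 : ℝ) ^ (m : ℕ) = (2 : ℝ) ^ ((m : ℝ) * (1 - s)) * (2 : ℝ) ^ ((m : ℝ) * s) := by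
        rw [← Real.rpow_add two_pos, ← Real.rpow_natCast (2 : ℝ) m]
        ring_nf
      have hRm' : R ^ m = (2 : ℝ) ^ ((m : ℝ) * (1 - s)) := by
        rw [hR, ← Real.rpow_natCast ((2:ℝ) ^ (1 - s)) m, ← Real.rpow_mul (by norm_num), mul_comm]
      have hpow_pos : (0 : ℝ) < (2 : ℝ) ^ ((m : ℝ) * s) := Real.rpow_pos_of_pos two_pos _
      calc B m ^ s = (((m : ℝ) + 1) ^ 2) ^ s * ((2 : ℝ) ^ m) ^ s := hsplit
        _ ≤ ((m : ℝ) + 1) ^ 2 * (2 : ℝ) ^ ((m : ℝ) * s) := by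
            rw [h2m]
            exact mul_le_mul_of_nonneg_right hA hpow_pos.le
        _ ≤ R ^ m * (2 : ℝ) ^ ((m : ℝ) * s) :=
            mul_le_mul_of_nonneg_right hkey hpow_pos.le
        _ = (2 : ℝ) ^ m := by rw [hRm', ← h2msum]
    rw [hBq, ← div_eq_mul_inv, le_div_iff₀ (Real.rpow_pos_of_pos (B_pos m) s)]
    simpa using hBs
  have h0 := hS.tendsto_atTop_zero
  have hlt : ∀ᶠ m : ℕ in atTop, (2 : ℝ) ^ m * vb p m ^ q < 1 :=
    h0.eventually (eventually_lt_nhds one_pos)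
  obtain ⟨m, h1, h2⟩ := (hev.and hlt).exists
  linarith

/-- the index injection for the `k`-th block -/
def J (k t : ℕ) : ℕ := Nat.pair k t + 1

lemma J_injective (k : ℕ) : Function.Injective (J k) := by
  intro t t' h
  have : Nat.pair k t = Nat.pair k t' := by unfold J at h; omega
  have := congrArg Nat.unpair this
  simpa [Nat.unpair_pair] using this

/-- the sequences with pairwise disjoint supports -/
def useq (p : ℝ) (k : ℕ) : ℕ → ℝ := fun n =>
  if n = 0 then 0
  else if (Nat.unpair (n - 1)).1 = k then (2 : ℝ)⁻¹ ^ k * bseq p (Nat.unpair (n - 1)).2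
  else 0

lemma useq_J (p : ℝ) (k t : ℕ) : useq p k (J k t) = (2 : ℝ)⁻¹ ^ k * bseq p t := by
  unfold useq J
  simp [Nat.unpair_pair]

lemma useq_J' (p : ℝ) (k k' t : ℕ) (h : k' ≠ k) : useq p k (J k' t) = 0 := by
  unfold useq J
  simp [Nat.unpair_pair, h]

lemma useq_not_range (p : ℝ) (k : ℕ) (n : ℕ) (hn : n ∉ Set.range (J k)) :
    useq p k n = 0 := by
  unfold useq
  split
  · rfl
  split
  · exfalso
    apply hn
    rename_i hn0 hk
    refine ⟨(Nat.unpair (n - 1)).2, ?_⟩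
    unfold J
    rw [← hk]
    rw [Nat.pair_unpair]
    omega
  · rfl

lemma useq_zero (p : ℝ) (k : ℕ) : useq p k 0 = 0 := rfl

/-- the constant vector e₀ -/
def e0 : ℕ → ℝ := fun n => if n = 0 then 1 else 0

lemma memSeqLp_e0 (q : ℝ) (hq : 0 < q) : MemSeqLp q e0 := by
  unfold MemSeqLp
  have : (fun j => |e0 j| ^ q) = fun j => if j = 0 then (1 : ℝ) else 0 := by
    funext j
    unfold e0
    split
    · simp [Real.one_rpow]
    · simp [Real.zero_rpow hq.ne']
  rw [this]
  exact (hasSum_ite_eq 0 1).summable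

lemma e0_ne_zero : e0 ≠ 0 := by
  intro h
  have := congrFun h 0
  simp [e0] at this

/-- the spanning vectors -/
def Xv (p : ℝ) (k : ℕ) : ℕ → ℝ := e0 + useq p k

/-- the submodule of ℓ^p sequences -/
def lpSub (p : ℝ) (hp : 0 < p) : Submodule ℝ (ℕ → ℝ) where
  carrier := {x | MemSeqLp p x}
  zero_mem' := by
    show MemSeqLp p 0
    unfold MemSeqLp
    have : (fun j => |(0 : ℕ → ℝ) j| ^ p) = fun _ => (0 : ℝ) := by
      funext j; simp [Real.zero_rpow hp.ne']
    rw [this]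
    exact summable_zero
  add_mem' := by
    rintro a b (ha : MemSeqLp p a) (hb : MemSeqLp p b)
    show MemSeqLp p (a + b)
    unfold MemSeqLp at *
    refine Summable.of_nonneg_of_le (fun n => Real.rpow_nonneg (abs_nonneg _) _)
      (fun n => ?_) (((ha.add hb).mul_left ((2 : ℝ) ^ p)))
    set M : ℝ := max |a n| |b n| with hM
    have hM0 : 0 ≤ M := le_trans (abs_nonneg _) (le_max_left _ _)
    have h1 : |a n + b n| ≤ 2 * M := by
      have := abs_add_le (a n) (b n)
      have h2 := le_max_left |a n| |b n|
      have h3 := le_max_right |a n| |b n|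
      rw [hM]; linarith
    calc |(a + b) n| ^ p = |a n + b n| ^ p := by simp [Pi.add_apply]
      _ ≤ (2 * M) ^ p := Real.rpow_le_rpow (abs_nonneg _) h1 hp.le
      _ = 2 ^ p * M ^ p := Real.mul_rpow (by norm_num) hM0
      _ ≤ 2 ^ p * (|a n| ^ p + |b n| ^ p) := by
          refine mul_le_mul_of_nonneg_left ?_ (Real.rpow_nonneg (by norm_num) p)
          rcases max_cases |a n| |b n| with ⟨h, _⟩ | ⟨h, _⟩ <;> rw [hM, h]
          · have := Real.rpow_nonneg (abs_nonneg (b n)) p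
            linarith
          · have := Real.rpow_nonneg (abs_nonneg (a n)) p
            linarith
  smul_mem' := by
    rintro c x (hx : MemSeqLp p x)
    show MemSeqLp p (c • x)
    unfold MemSeqLp at *
    have : (fun j => |(c • x) j| ^ p) = fun j => |c| ^ p * |x j| ^ p := by
      funext j
      rw [Pi.smul_apply, smul_eq_mul, abs_mul, Real.mul_rpow (abs_nonneg _) (abs_nonneg _)]
    rw [this]
    exact hx.mul_left _

lemma memSeqLp_useq (p : ℝ) (hp : 0 < p) (k : ℕ) : MemSeqLp p (useq p k) := by
  unfold MemSeqLp
  rw [← Function.Injective.summable_iff (J_injective k) (fun n hn => by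
    rw [useq_not_range p k n hn]
    simp [Real.zero_rpow hp.ne'])]
  have : ((fun j => |useq p k j| ^ p) ∘ J k) =
      fun t => |(2 : ℝ)⁻¹ ^ k| ^ p * |bseq p t| ^ p := by
    funext t
    simp only [Function.comp_apply, useq_J, abs_mul,
      Real.mul_rpow (abs_nonneg _) (abs_nonneg _)]
  rw [this]
  exact (summable_bseq_p p hp).mul_left _

lemma tsum_useq (p : ℝ) (hp : 0 < p) (k : ℕ) :
    (∑' n, |useq p k n| ^ p) = ((2 : ℝ)⁻¹ ^ k) ^ p * ∑' t, |bseq p t| ^ p := by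
  rw [← Function.Injective.tsum_eq (J_injective k) (f := fun n => |useq p k n| ^ p)
    (by
      intro n hn
      simp only [Function.mem_support] at hn
      by_contra hmem
      exact hn (by rw [useq_not_range p k n hmem]; simp [Real.zero_rpow hp.ne']))]
  have : (fun t => |useq p k (J k t)| ^ p) =
      fun t => ((2 : ℝ)⁻¹ ^ k) ^ p * |bseq p t| ^ p := by
    funext t
    rw [useq_J, abs_mul, Real.mul_rpow (abs_nonneg _) (abs_nonneg _),
      abs_of_pos (by positivity : (0:ℝ) < (2 : ℝ)⁻¹ ^ k)]
  rw [this, tsum_mul_left]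

end

end Stmt7Aux

open Stmt7Aux in
/-- For every `p > 0`, the set `ℓ^p \ ⋃_{0<q<p} ℓ^q` is not `(ℵ₀, 𝔠)`-spaceable in `ℓ^p`:
there is a countably infinite dimensional subspace `W` of `ℓ^p` with
`W \ {0} ⊆ ℓ^p \ ⋃_{0<q<p} ℓ^q` that is contained in no closed subspace `W₁` with
`W₁ \ {0} ⊆ ℓ^p \ ⋃_{0<q<p} ℓ^q`. -/
theorem stmt7 (p : ℝ) (hp : 0 < p) :
    ∃ W : Submodule ℝ (ℕ → ℝ), Module.rank ℝ W = Cardinal.aleph0 ∧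
      (W : Set (ℕ → ℝ)) ⊆ ExoticSet p ∪ {0} ∧
      ¬ ∃ W₁ : Submodule ℝ (ℕ → ℝ), W ≤ W₁ ∧ LpClosed p W₁ ∧
          (W₁ : Set (ℕ → ℝ)) ⊆ ExoticSet p ∪ {0} := by
  classical
  refine ⟨Submodule.span ℝ (Set.range (Xv p)), ?_, ?_, ?_⟩
  · -- rank
    have hli : LinearIndependent ℝ (Xv p) := by
      rw [linearIndependent_iff']
      intro s g hsum k hk
      have hfun := congrFun hsum (J k 0)
      have hJ0 : J k 0 ≠ 0 := by unfold J; omega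
      have heval : ∀ i : ℕ, Xv p i (J k 0) =
          if i = k then (2 : ℝ)⁻¹ ^ k * bseq p 0 else 0 := by
        intro i
        unfold Xv
        rw [Pi.add_apply]
        have he0 : e0 (J k 0) = 0 := by unfold e0; simp [hJ0]
        rw [he0, zero_add]
        by_cases hik : i = k
        · subst hik; rw [useq_J]; simp
        · rw [useq_J' p i k 0 (by omega)]
          simp [hik]
      have hsum' : (∑ i ∈ s, g i • Xv p i) (J k 0) =
          ∑ i ∈ s, g i * (if i = k then (2 : ℝ)⁻¹ ^ k * bseq p 0 else 0) := by
        rw [Finset.sum_apply]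
        exact Finset.sum_congr rfl fun i _ => by
          rw [Pi.smul_apply, smul_eq_mul, heval i]
      rw [hsum', Pi.zero_apply] at hfun
      have : ∑ i ∈ s, g i * (if i = k then (2 : ℝ)⁻¹ ^ k * bseq p 0 else 0)
          = g k * ((2 : ℝ)⁻¹ ^ k * bseq p 0) := by
        rw [Finset.sum_congr rfl (fun i _ => by rw [mul_ite, mul_zero])]
        rw [Finset.sum_ite_eq' s k (fun i => g i * ((2 : ℝ)⁻¹ ^ k * bseq p 0))]
        simp [hk]
      rw [this] at hfun
      have hpos : (0 : ℝ) < (2 : ℝ)⁻¹ ^ k * bseq p 0 := by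
        have := bseq_pos p 0
        positivity
      exact (mul_eq_zero.1 hfun).resolve_right hpos.ne'
    have hmk : Cardinal.mk (Set.range (Xv p)) = Cardinal.aleph0 := by
      simpa using Cardinal.mk_range_eq_of_injective hli.injective
    rw [rank_span hli, hmk]
  · -- contained in exotic ∪ {0}
    intro x hx
    by_cases hx0 : x = 0
    · right; simp [hx0]
    left
    constructor
    · -- x ∈ ℓ^p
      have hle : Submodule.span ℝ (Set.range (Xv p)) ≤ lpSub p hp := by
        rw [Submodule.span_le]
        rintro _ ⟨k, rfl⟩
        exact (lpSub p hp).add_mem (memSeqLp_e0 p hp) (memSeqLp_useq p hp k)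
      exact hle hx
    · -- x ∉ ℓ^q for 0 < q < p
      intro q hq hqp hsum
      obtain ⟨c, hc⟩ := Finsupp.mem_span_range_iff_exists_finsupp.1 hx
      have hcne : c ≠ 0 := by
        intro h
        subst h
        simp [Finsupp.sum_zero_index] at hc
        exact hx0 hc.symm
      obtain ⟨k, hk⟩ := Finsupp.support_nonempty_iff.2 hcne
      have hck : c k ≠ 0 := Finsupp.mem_support_iff.1 hk
      -- evaluate x on block k
      have heval : ∀ t : ℕ, x (J k t) = c k * ((2 : ℝ)⁻¹ ^ k * bseq p t) := by
        intro t
        rw [← hc]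
        have hJ0 : J k t ≠ 0 := by unfold J; omega
        rw [Finsupp.sum, Finset.sum_apply]
        have : ∀ i ∈ c.support, (c i • Xv p i) (J k t) =
            if i = k then c k * ((2 : ℝ)⁻¹ ^ k * bseq p t) else 0 := by
          intro i _
          rw [Pi.smul_apply, smul_eq_mul]
          unfold Xv
          rw [Pi.add_apply]
          have he0 : e0 (J k t) = 0 := by unfold e0; simp [hJ0]
          rw [he0, zero_add]
          by_cases hik : i = k
          · subst hik; rw [useq_J]; simp
          · rw [useq_J' p i k t (by omega)]
            simp [hik]
        rw [Finset.sum_congr rfl this, Finset.sum_ite_eq' c.support k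
          (fun _ => c k * ((2 : ℝ)⁻¹ ^ k * bseq p t))]
        simp [hk]
      have hcomp : Summable ((fun n => |x n| ^ q) ∘ J k) :=
        hsum.comp_injective (J_injective k)
      have hconst : (0 : ℝ) < |c k * (2 : ℝ)⁻¹ ^ k| ^ q := by
        apply Real.rpow_pos_of_pos
        rw [abs_pos]
        exact mul_ne_zero hck (by positivity)
      have hsb : Summable fun t => |bseq p t| ^ q := by
        have h1 : ((fun n => |x n| ^ q) ∘ J k) =
            fun t => |c k * (2 : ℝ)⁻¹ ^ k| ^ q * |bseq p t| ^ q := by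
          funext t
          simp only [Function.comp_apply, heval t]
          rw [show c k * ((2 : ℝ)⁻¹ ^ k * bseq p t) = (c k * (2 : ℝ)⁻¹ ^ k) * bseq p t by ring,
            abs_mul, Real.mul_rpow (abs_nonneg _) (abs_nonneg _)]
        rw [h1] at hcomp
        have := hcomp.mul_left (|c k * (2 : ℝ)⁻¹ ^ k| ^ q)⁻¹
        refine this.congr fun t => ?_
        rw [← mul_assoc, inv_mul_cancel₀ hconst.ne', one_mul]
      exact not_summable_bseq_q p q hp hq hqp hsb
  · -- no closed superspace
    rintro ⟨W₁, hle, hcl, hsub⟩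
    have hXmem : ∀ k, Xv p k ∈ W₁ := fun k =>
      hle (Submodule.subset_span ⟨k, rfl⟩)
    have htend : LpTendsto p (fun k => Xv p k) e0 := by
      unfold LpTendsto
      have heq : ∀ k : ℕ, (∑' j, |Xv p k j - e0 j| ^ p) =
          (((2 : ℝ)⁻¹ ^ p) ^ k) * ∑' t, |bseq p t| ^ p := by
        intro k
        have h1 : (fun j => |Xv p k j - e0 j| ^ p) = fun j => |useq p k j| ^ p := by
          funext j
          unfold Xv
          rw [Pi.add_apply]
          ring_nf
        rw [h1, tsum_useq p hp k]
        congr 1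
        rw [← Real.rpow_natCast ((2:ℝ)⁻¹) k, ← Real.rpow_mul (by norm_num),
          mul_comm, Real.rpow_mul (by norm_num), Real.rpow_natCast]
      rw [funext heq]
      have hr0 : (0 : ℝ) ≤ (2 : ℝ)⁻¹ ^ p := Real.rpow_nonneg (by norm_num) p
      have hr1 : (2 : ℝ)⁻¹ ^ p < 1 :=
        Real.rpow_lt_one (by norm_num) (by norm_num) hp
      have := (tendsto_pow_atTop_nhds_zero_of_lt_one hr0 hr1).mul_const
        (∑' t, |bseq p t| ^ p)
      simpa using this
    have he0mem : e0 ∈ W₁ := hcl (fun k => Xv p k) hXmem e0 (memSeqLp_e0 p hp) htend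
    rcases hsub he0mem with hex | h0
    · exact hex.2 (p / 2) (by linarith) (by linarith) (memSeqLp_e0 (p / 2) (by linarith))
    · exact e0_ne_zero h0
end

section
/- Let 1 ≤ p < ∞ and let Γ be a set of cardinality 2^{ℵ₁}. Let {e_i : i ∈ Γ} be the canonical generalized Schauder basis of ℓ_p(Γ), fix i₀, i₁ ∈ Γ, and write {e_i : i ∈ Γ} \ {e_{i₀}, e_{i₁}} = ⋃_{(λ,μ)∈ℝ²} A_{(λ,μ)} as a pairwise disjoint union with each A_{(λ,μ)} of cardinality 2^{ℵ₁}. Define A = ⋃_{(λ,μ)∈ℝ²} span({λ e_{i₀} + μ e_{i₁}} ∪ A_{(λ,μ)}). Then there is no vector subspace W of ℓ_p(Γ) with dim W = 2^{ℵ₁} and span{e_{i₀}, e_{i₁}} ⊆ W ⊆ A ∪ {0}; in particular A is not (2, 2^{ℵ₁})-lineable, although A is (1, 2^{ℵ₁})-lineable. -/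
/-!
A vector `x ∈ A` with `x j ≠ 0` for some `j ∉ {i₀, i₁}` can only lie in the span indexed by the
unique `z` with `e j ∈ 𝒜 z`. So if `W ⊇ span {e i₀, e i₁}` inside `A ∪ {0}` contained such a `w`,
then `w`, `w + e i₀` and `w + e i₁` would all lie in `span ({z.1 • e i₀ + z.2 • e i₁} ∪ 𝒜 z)`,
which meets the plane `span {e i₀, e i₁}` only in the line through `z`. Hence `W` is that plane
and has dimension `2`. On the other hand every line `𝕜 ∙ v ⊆ A` lies in one of these spans, whose
dimension is `#(𝒜 z) = 2 ^ ℵ₁`.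
-/

open Cardinal Classical
open scoped ENNReal

section General

theorem LinearMap.eq_zero_of_mem_span {K V : Type*} [Semiring K] [AddCommMonoid V] [Module K V]
    (f : V →ₗ[K] K) {T : Set V} (hT : ∀ t ∈ T, f t = 0) {x : V} (hx : x ∈ Submodule.span K T) :
    f x = 0 :=
  (Submodule.span_le (p := LinearMap.ker f)).2 hT hx

variable {K V : Type*} [DivisionRing K] [AddCommGroup V] [Module K V]

theorem rank_span_union_singleton_of_linearIndepOn {T : Set V} (hT : LinearIndepOn K id T)
    (hinf : ℵ₀ ≤ #T) (v : V) : Module.rank K (Submodule.span K ({v} ∪ T)) = #T := by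
  refine le_antisymm ?_ ?_
  · calc Module.rank K (Submodule.span K ({v} ∪ T)) ≤ #({v} ∪ T : Set V) := rank_span_le _
      _ ≤ 1 + #T := by simpa using mk_union_le {v} T
      _ = #T := add_eq_right hinf (one_le_aleph0.trans hinf)
  · rw [← rank_span_set hT]
    exact Submodule.rank_mono (Submodule.span_mono Set.subset_union_right)

end General

namespace lp

section Apply

variable {α 𝕜 : Type*} {E : α → Type*} [∀ i, NormedAddCommGroup (E i)] {p : ℝ≥0∞}

@[simp]
theorem add_apply (f g : lp E p) (i : α) : (f + g) i = f i + g i := rfl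

@[simp]
theorem smul_apply [NormedRing 𝕜] [∀ i, Module 𝕜 (E i)] [∀ i, IsBoundedSMul 𝕜 (E i)] (c : 𝕜)
    (f : lp E p) (i : α) : (c • f) i = c • f i := rfl

end Apply

variable {𝕜 : Type*} [NormedField 𝕜] {p : ℝ≥0∞} {Γ : Type*}

theorem linearIndependent_single_one [DecidableEq Γ] :
    LinearIndependent 𝕜 (fun i : Γ => lp.single p i (1 : 𝕜)) :=
  .of_comp (LinearMap.pi fun j => lp.evalₗ (fun _ : Γ => 𝕜) p j)
    (Pi.linearIndependent_single_one Γ 𝕜)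

theorem rank_span_of_subset_range_single [DecidableEq Γ] {T : Set (lp (fun _ : Γ => 𝕜) p)}
    (hT : T ⊆ Set.range fun i => lp.single p i (1 : 𝕜)) :
    Module.rank 𝕜 (Submodule.span 𝕜 T) = #T :=
  rank_span_set (linearIndependent_single_one.linearIndepOn_id.mono hT)

theorem rank_span_pair_single [DecidableEq Γ] {i₀ i₁ : Γ} (hi : i₀ ≠ i₁) :
    Module.rank 𝕜 (Submodule.span 𝕜
      {lp.single p i₀ (1 : 𝕜), lp.single p i₁ 1} : Submodule 𝕜 (lp (fun _ : Γ => 𝕜) p)) = 2 := by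
  have hne : (lp.single p i₀ (1 : 𝕜) : lp (fun _ : Γ => 𝕜) p) ≠ lp.single p i₁ 1 :=
    (linearIndependent_single_one (p := p)).injective.ne hi
  rw [rank_span_of_subset_range_single (by rintro _ (rfl | rfl) <;> exact Set.mem_range_self _),
    mk_insert (by simpa using hne), mk_singleton]
  norm_num

theorem apply_eq_zero_of_mem_span {T : Set (lp (fun _ : Γ => 𝕜) p)} {x : lp (fun _ : Γ => 𝕜) p}
    {j : Γ} (hT : ∀ t ∈ T, t j = 0) (hx : x ∈ Submodule.span 𝕜 T) : x j = 0 :=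
  (lp.evalₗ (fun _ : Γ => 𝕜) p j).eq_zero_of_mem_span hT hx

theorem mem_span_pair_single_of_apply_eq_zero [DecidableEq Γ] {i₀ i₁ : Γ} (hi : i₀ ≠ i₁)
    {x : lp (fun _ : Γ => 𝕜) p} (hx : ∀ j, j ≠ i₀ → j ≠ i₁ → x j = 0) :
    x ∈ Submodule.span 𝕜 {lp.single p i₀ (1 : 𝕜), lp.single p i₁ 1} := by
  rw [Submodule.mem_span_pair]
  refine ⟨x i₀, x i₁, lp.ext (funext fun j => ?_)⟩
  by_cases h₀ : j = i₀
  · simp [h₀, lp.single_apply, hi]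
  by_cases h₁ : j = i₁
  · simp [h₁, lp.single_apply, hi.symm]
  simp [h₀, h₁, lp.single_apply, hx j h₀ h₁]

theorem not_single_mem_span_line_union [DecidableEq Γ] {i₀ i₁ : Γ} (hi : i₀ ≠ i₁)
    (z : 𝕜 × 𝕜) {T : Set (lp (fun _ : Γ => 𝕜) p)} (hT : ∀ t ∈ T, t i₀ = 0 ∧ t i₁ = 0) :
    ¬ (lp.single p i₀ (1 : 𝕜) ∈
        Submodule.span 𝕜 ({z.1 • lp.single p i₀ 1 + z.2 • lp.single p i₁ 1} ∪ T) ∧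
      lp.single p i₁ (1 : 𝕜) ∈
        Submodule.span 𝕜 ({z.1 • lp.single p i₀ 1 + z.2 • lp.single p i₁ 1} ∪ T)) := by
  rintro ⟨h₀, h₁⟩
  -- `φ x = z.2 * x i₀ - z.1 * x i₁` kills the generators, which forces `z = 0`;
  -- then evaluation at `i₀` kills them too
  let φ := z.2 • lp.evalₗ (𝕜 := 𝕜) (fun _ : Γ => 𝕜) p i₀ - z.1 • lp.evalₗ (fun _ : Γ => 𝕜) p i₁
  have hφ : ∀ x ∈ Submodule.span 𝕜 ({z.1 • lp.single p i₀ 1 + z.2 • lp.single p i₁ 1} ∪ T),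
      φ x = 0 := by
    refine fun x hx => φ.eq_zero_of_mem_span ?_ hx
    rintro t (rfl | ht)
    · simp [φ, lp.single_apply, hi, hi.symm, mul_comm]
    · simp [φ, hT t ht]
  have hz₂ : z.2 = 0 := by simpa [φ, lp.single_apply, hi.symm] using hφ _ h₀
  have hz₁ : z.1 = 0 := by simpa [φ, lp.single_apply, hi] using hφ _ h₁
  have := apply_eq_zero_of_mem_span (j := i₀) ?_ h₀
  · simp at this
  rintro t (rfl | ht)
  · simp [hz₁, hz₂]
  · exact (hT t ht).1

end lp

section LineSpan

variable {𝕜 : Type*} [NormedField 𝕜] {p : ℝ≥0∞} {Γ : Type*} [DecidableEq Γ] {i₀ i₁ : Γ}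
  {𝒜 : 𝕜 × 𝕜 → Set (lp (fun _ : Γ => 𝕜) p)}

variable (i₀ i₁ 𝒜) in
noncomputable def lineSpan (z : 𝕜 × 𝕜) : Submodule 𝕜 (lp (fun _ : Γ => 𝕜) p) :=
  Submodule.span 𝕜 ({z.1 • lp.single p i₀ 1 + z.2 • lp.single p i₁ 1} ∪ 𝒜 z)

-- The set `A` of the statement.
variable (i₀ i₁ 𝒜) in
def lineSpanUnion : Set (lp (fun _ : Γ => 𝕜) p) :=
  ⋃ z, (lineSpan i₀ i₁ 𝒜 z : Set (lp (fun _ : Γ => 𝕜) p))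

theorem exists_single_eq_of_mem_of_iUnion_eq
    (h𝒜cover : (⋃ z, 𝒜 z) = Set.range (fun i => lp.single p i (1 : 𝕜)) \
      {lp.single p i₀ 1, lp.single p i₁ 1}) {z : 𝕜 × 𝕜} {t : lp (fun _ : Γ => 𝕜) p}
    (ht : t ∈ 𝒜 z) : ∃ k, k ≠ i₀ ∧ k ≠ i₁ ∧ lp.single p k 1 = t := by
  have ht' := h𝒜cover ▸ Set.mem_iUnion_of_mem z ht
  obtain ⟨⟨k, rfl⟩, hk⟩ := ht'
  exact ⟨k, by rintro rfl; simp at hk, by rintro rfl; simp at hk, rfl⟩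

theorem apply_eq_zero_of_mem_of_iUnion_eq
    (h𝒜cover : (⋃ z, 𝒜 z) = Set.range (fun i => lp.single p i (1 : 𝕜)) \
      {lp.single p i₀ 1, lp.single p i₁ 1}) {z : 𝕜 × 𝕜} {t : lp (fun _ : Γ => 𝕜) p}
    (ht : t ∈ 𝒜 z) : t i₀ = 0 ∧ t i₁ = 0 := by
  obtain ⟨k, hk₀, hk₁, rfl⟩ := exists_single_eq_of_mem_of_iUnion_eq h𝒜cover ht
  simp [lp.single_apply, hk₀.symm, hk₁.symm]

theorem exists_single_mem_of_iUnion_eq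
    (h𝒜cover : (⋃ z, 𝒜 z) = Set.range (fun i => lp.single p i (1 : 𝕜)) \
      {lp.single p i₀ 1, lp.single p i₁ 1}) {j : Γ} (hj₀ : j ≠ i₀) (hj₁ : j ≠ i₁) :
    ∃ z, lp.single p j (1 : 𝕜) ∈ 𝒜 z := by
  have hinj := (lp.linearIndependent_single_one (𝕜 := 𝕜) (p := p) (Γ := Γ)).injective
  have hj : lp.single p j (1 : 𝕜) ∈ ⋃ z, 𝒜 z := by
    rw [h𝒜cover]
    exact ⟨Set.mem_range_self j, by simp [hinj.eq_iff, hj₀, hj₁]⟩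
  exact Set.mem_iUnion.1 hj

theorem mem_lineSpan_of_apply_ne_zero (h𝒜disj : Pairwise (Function.onFun Disjoint 𝒜))
    (h𝒜cover : (⋃ z, 𝒜 z) = Set.range (fun i => lp.single p i (1 : 𝕜)) \
      {lp.single p i₀ 1, lp.single p i₁ 1})
    {j : Γ} (hj₀ : j ≠ i₀) (hj₁ : j ≠ i₁) {z : 𝕜 × 𝕜} (hj : lp.single p j (1 : 𝕜) ∈ 𝒜 z)
    {x : lp (fun _ : Γ => 𝕜) p} (hx : x ∈ lineSpanUnion i₀ i₁ 𝒜) (hxj : x j ≠ 0) :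
    x ∈ lineSpan i₀ i₁ 𝒜 z := by
  obtain ⟨z', hz'⟩ := Set.mem_iUnion.1 hx
  obtain rfl : z' = z := by
    by_contra hne
    refine hxj (lp.apply_eq_zero_of_mem_span ?_ hz')
    rintro t (rfl | ht)
    · simp [lp.single_apply, hj₀, hj₁]
    · obtain ⟨k, -, -, rfl⟩ := exists_single_eq_of_mem_of_iUnion_eq h𝒜cover ht
      have hkj : j ≠ k := by
        rintro rfl
        exact Set.disjoint_left.1 (h𝒜disj hne) ht hj
      simp [lp.single_apply, hkj]
  exact hz'

theorem span_pair_single_subset_lineSpanUnion :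
    ((Submodule.span 𝕜 {lp.single p i₀ (1 : 𝕜), lp.single p i₁ 1} :
      Submodule 𝕜 (lp (fun _ : Γ => 𝕜) p)) : Set (lp (fun _ : Γ => 𝕜) p)) ⊆
      lineSpanUnion i₀ i₁ 𝒜 := by
  intro x hx
  obtain ⟨a, b, rfl⟩ := Submodule.mem_span_pair.1 hx
  exact Set.mem_iUnion_of_mem (a, b) (Submodule.subset_span (Or.inl rfl))

theorem le_span_pair_of_subset_lineSpanUnion (hi : i₀ ≠ i₁)
    (h𝒜disj : Pairwise (Function.onFun Disjoint 𝒜))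
    (h𝒜cover : (⋃ z, 𝒜 z) = Set.range (fun i => lp.single p i (1 : 𝕜)) \
      {lp.single p i₀ 1, lp.single p i₁ 1})
    {W : Submodule 𝕜 (lp (fun _ : Γ => 𝕜) p)}
    (hle : Submodule.span 𝕜 {lp.single p i₀ (1 : 𝕜), lp.single p i₁ 1} ≤ W)
    (hW : (W : Set (lp (fun _ : Γ => 𝕜) p)) ⊆ lineSpanUnion i₀ i₁ 𝒜 ∪ {0}) :
    W ≤ Submodule.span 𝕜 {lp.single p i₀ (1 : 𝕜), lp.single p i₁ 1} := by
  intro w hw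
  by_contra hw'
  obtain ⟨j, hj₀, hj₁, hwj⟩ : ∃ j, j ≠ i₀ ∧ j ≠ i₁ ∧ w j ≠ 0 := by
    by_contra! h
    exact hw' (lp.mem_span_pair_single_of_apply_eq_zero hi h)
  obtain ⟨z, hz⟩ := exists_single_mem_of_iUnion_eq h𝒜cover hj₀ hj₁
  -- `w`, `w + e i₀` and `w + e i₁` are all nonzero at `j`, so they lie in the same `lineSpan z`
  have hmem : ∀ x ∈ W, x j ≠ 0 → x ∈ lineSpan i₀ i₁ 𝒜 z := fun x hxW hxj =>
    mem_lineSpan_of_apply_ne_zero h𝒜disj h𝒜cover hj₀ hj₁ hz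
      ((hW hxW).resolve_right fun h => hxj (by simp [show x = 0 from h])) hxj
  have hmem_add : ∀ i ∈ ({i₀, i₁} : Set Γ), lp.single p i (1 : 𝕜) ∈ lineSpan i₀ i₁ 𝒜 z := by
    rintro i hi'
    have hiW : lp.single p i (1 : 𝕜) ∈ W := hle (Submodule.subset_span (by aesop))
    have hji : j ≠ i := by aesop
    simpa using sub_mem (hmem _ (W.add_mem hw hiW) (by simpa [lp.single_apply, hji] using hwj))
      (hmem w hw hwj)
  exact lp.not_single_mem_span_line_union hi z
    (fun t ht => apply_eq_zero_of_mem_of_iUnion_eq h𝒜cover ht)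
    ⟨hmem_add i₀ (by simp), hmem_add i₁ (by simp)⟩

theorem exists_rank_eq_le_of_rank_eq_one
    (h𝒜cover : (⋃ z, 𝒜 z) = Set.range (fun i => lp.single p i (1 : 𝕜)) \
      {lp.single p i₀ 1, lp.single p i₁ 1})
    {κ : Cardinal} (hκ : ℵ₀ ≤ κ) (h𝒜card : ∀ z, #(𝒜 z) = κ)
    {W : Submodule 𝕜 (lp (fun _ : Γ => 𝕜) p)} (hW1 : Module.rank 𝕜 W = 1)
    (hW : (W : Set (lp (fun _ : Γ => 𝕜) p)) ⊆ lineSpanUnion i₀ i₁ 𝒜 ∪ {0}) :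
    ∃ W' : Submodule 𝕜 (lp (fun _ : Γ => 𝕜) p), Module.rank 𝕜 W' = κ ∧ W ≤ W' ∧
      (W' : Set (lp (fun _ : Γ => 𝕜) p)) ⊆ lineSpanUnion i₀ i₁ 𝒜 ∪ {0} := by
  obtain ⟨v, hvW, hv0, hWv⟩ := (rank_submodule_eq_one_iff W).1 hW1
  obtain ⟨z, hz⟩ := Set.mem_iUnion.1 ((hW hvW).resolve_right hv0)
  have h𝒜z : LinearIndepOn 𝕜 id (𝒜 z) :=
    lp.linearIndependent_single_one.linearIndepOn_id.mono fun t ht =>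
      let ⟨k, _, _, hk⟩ := exists_single_eq_of_mem_of_iUnion_eq h𝒜cover ht; ⟨k, hk⟩
  refine ⟨lineSpan i₀ i₁ 𝒜 z, ?_, hWv.trans ((Submodule.span_singleton_le_iff_mem _ _).2 hz),
    fun x hx => Or.inl (Set.mem_iUnion_of_mem z hx)⟩
  rw [lineSpan, rank_span_union_singleton_of_linearIndepOn h𝒜z ((h𝒜card z).symm ▸ hκ), h𝒜card]

end LineSpan

theorem stmt9_general (p : ℝ≥0∞)
    (Γ : Type) [DecidableEq Γ] (i₀ i₁ : Γ) (hi : i₀ ≠ i₁)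
    (E : Γ → lp (fun _ : Γ => ℝ) p) (hE : ∀ i, E i = lp.single p i (1 : ℝ))
    (𝒜 : ℝ × ℝ → Set (lp (fun _ : Γ => ℝ) p))
    (h𝒜disj : Pairwise (Function.onFun Disjoint 𝒜))
    (h𝒜card : ∀ z : ℝ × ℝ, #(𝒜 z) = 2 ^ aleph 1)
    (h𝒜cover : (⋃ z : ℝ × ℝ, 𝒜 z) = (Set.range E) \ {E i₀, E i₁})
    (A : Set (lp (fun _ : Γ => ℝ) p))
    (hA : A = ⋃ z : ℝ × ℝ,
      (Submodule.span ℝ ({z.1 • E i₀ + z.2 • E i₁} ∪ 𝒜 z) : Set (lp (fun _ : Γ => ℝ) p))) :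
    (¬ ∃ W : Submodule ℝ (lp (fun _ : Γ => ℝ) p),
        Module.rank ℝ W = 2 ^ aleph 1 ∧
        Submodule.span ℝ {E i₀, E i₁} ≤ W ∧ (W : Set (lp (fun _ : Γ => ℝ) p)) ⊆ A ∪ {0}) ∧
    (¬ ((∃ W : Submodule ℝ (lp (fun _ : Γ => ℝ) p),
          Module.rank ℝ W = 2 ∧ (W : Set (lp (fun _ : Γ => ℝ) p)) ⊆ A ∪ {0}) ∧
        (∀ W : Submodule ℝ (lp (fun _ : Γ => ℝ) p),
          Module.rank ℝ W = 2 → (W : Set (lp (fun _ : Γ => ℝ) p)) ⊆ A ∪ {0} →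
          ∃ W' : Submodule ℝ (lp (fun _ : Γ => ℝ) p), Module.rank ℝ W' = 2 ^ aleph 1 ∧
            W ≤ W' ∧ (W' : Set (lp (fun _ : Γ => ℝ) p)) ⊆ A ∪ {0}))) ∧
    ((∃ W : Submodule ℝ (lp (fun _ : Γ => ℝ) p),
        Module.rank ℝ W = 1 ∧ (W : Set (lp (fun _ : Γ => ℝ) p)) ⊆ A ∪ {0}) ∧
      (∀ W : Submodule ℝ (lp (fun _ : Γ => ℝ) p),
        Module.rank ℝ W = 1 → (W : Set (lp (fun _ : Γ => ℝ) p)) ⊆ A ∪ {0} →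
        ∃ W' : Submodule ℝ (lp (fun _ : Γ => ℝ) p), Module.rank ℝ W' = 2 ^ aleph 1 ∧
          W ≤ W' ∧ (W' : Set (lp (fun _ : Γ => ℝ) p)) ⊆ A ∪ {0})) := by
  obtain rfl : E = fun i => lp.single p i 1 := funext hE
  obtain rfl : A = lineSpanUnion i₀ i₁ 𝒜 := hA
  have hκ : ℵ₀ ≤ (2 : Cardinal) ^ aleph 1 := (aleph0_le_aleph 1).trans (cantor _).le
  have h2 : (2 : Cardinal) < 2 ^ aleph 1 := ofNat_lt_aleph0.trans_le hκ
  have hplane := span_pair_single_subset_lineSpanUnion (p := p) (i₀ := i₀) (i₁ := i₁) (𝒜 := 𝒜)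
  have noW : ¬ ∃ W : Submodule ℝ (lp (fun _ : Γ => ℝ) p), Module.rank ℝ W = 2 ^ aleph 1 ∧
      Submodule.span ℝ {lp.single p i₀ 1, lp.single p i₁ 1} ≤ W ∧
      (W : Set (lp (fun _ : Γ => ℝ) p)) ⊆ lineSpanUnion i₀ i₁ 𝒜 ∪ {0} := by
    rintro ⟨W, hWrank, hle, hW⟩
    have hW2 := (Submodule.rank_mono (le_span_pair_of_subset_lineSpanUnion hi h𝒜disj h𝒜cover hle
      hW)).trans_eq (lp.rank_span_pair_single hi)
    exact (hWrank ▸ hW2).not_gt h2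
  refine ⟨noW, fun ⟨_, hext⟩ => noW (hext _ (lp.rank_span_pair_single hi)
    (hplane.trans Set.subset_union_left)), ⟨Submodule.span ℝ {lp.single p i₀ 1}, ?_, ?_⟩,
    fun W hW1 hW => exists_rank_eq_le_of_rank_eq_one h𝒜cover hκ h𝒜card hW1 hW⟩
  · rw [lp.rank_span_of_subset_range_single (by simp), mk_singleton]
  · exact fun x hx => Or.inl
      (hplane (Submodule.span_mono (Set.singleton_subset_iff.2 (Set.mem_insert _ _)) hx))

/-- Let `1 ≤ p < ∞` and let `Γ` be a set of cardinality `2^{ℵ₁}`.  Let `e i = lp.single p i 1`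
be the canonical generalized Schauder basis of `ℓ_p(Γ)`, fix `i₀ i₁ ∈ Γ`, and write
`{e i : i ∈ Γ} \ {e i₀, e i₁}` as a pairwise disjoint union `⋃_{(λ,μ)∈ℝ²} 𝒜 (λ,μ)` with
each `𝒜 (λ,μ)` of cardinality `2^{ℵ₁}`.  Let
`A = ⋃_{(λ,μ)} span ({λ e i₀ + μ e i₁} ∪ 𝒜 (λ,μ))`.  Then no subspace `W` of `ℓ_p(Γ)` of
dimension `2^{ℵ₁}` satisfies `span {e i₀, e i₁} ⊆ W ⊆ A ∪ {0}`; in particular `A` is not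
`(2, 2^{ℵ₁})`-lineable, although `A` is `(1, 2^{ℵ₁})`-lineable. -/
theorem stmt9 (p : ℝ≥0∞) [Fact (1 ≤ p)] (hp : p ≠ ⊤)
    (Γ : Type) [DecidableEq Γ] (hΓ : #Γ = 2 ^ aleph 1) (i₀ i₁ : Γ) (hi : i₀ ≠ i₁)
    (E : Γ → lp (fun _ : Γ => ℝ) p) (hE : ∀ i, E i = lp.single p i (1 : ℝ))
    (𝒜 : ℝ × ℝ → Set (lp (fun _ : Γ => ℝ) p))
    (h𝒜disj : Pairwise (Function.onFun Disjoint 𝒜))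
    (h𝒜card : ∀ z : ℝ × ℝ, #(𝒜 z) = 2 ^ aleph 1)
    (h𝒜cover : (⋃ z : ℝ × ℝ, 𝒜 z) = (Set.range E) \ {E i₀, E i₁})
    (A : Set (lp (fun _ : Γ => ℝ) p))
    (hA : A = ⋃ z : ℝ × ℝ,
      (Submodule.span ℝ ({z.1 • E i₀ + z.2 • E i₁} ∪ 𝒜 z) : Set (lp (fun _ : Γ => ℝ) p))) :
    (¬ ∃ W : Submodule ℝ (lp (fun _ : Γ => ℝ) p),
        Module.rank ℝ W = 2 ^ aleph 1 ∧
        Submodule.span ℝ {E i₀, E i₁} ≤ W ∧ (W : Set (lp (fun _ : Γ => ℝ) p)) ⊆ A ∪ {0}) ∧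
    (¬ ((∃ W : Submodule ℝ (lp (fun _ : Γ => ℝ) p),
          Module.rank ℝ W = 2 ∧ (W : Set (lp (fun _ : Γ => ℝ) p)) ⊆ A ∪ {0}) ∧
        (∀ W : Submodule ℝ (lp (fun _ : Γ => ℝ) p),
          Module.rank ℝ W = 2 → (W : Set (lp (fun _ : Γ => ℝ) p)) ⊆ A ∪ {0} →
          ∃ W' : Submodule ℝ (lp (fun _ : Γ => ℝ) p), Module.rank ℝ W' = 2 ^ aleph 1 ∧
            W ≤ W' ∧ (W' : Set (lp (fun _ : Γ => ℝ) p)) ⊆ A ∪ {0}))) ∧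
    ((∃ W : Submodule ℝ (lp (fun _ : Γ => ℝ) p),
        Module.rank ℝ W = 1 ∧ (W : Set (lp (fun _ : Γ => ℝ) p)) ⊆ A ∪ {0}) ∧
      (∀ W : Submodule ℝ (lp (fun _ : Γ => ℝ) p),
        Module.rank ℝ W = 1 → (W : Set (lp (fun _ : Γ => ℝ) p)) ⊆ A ∪ {0} →
        ∃ W' : Submodule ℝ (lp (fun _ : Γ => ℝ) p), Module.rank ℝ W' = 2 ^ aleph 1 ∧
          W ≤ W' ∧ (W' : Set (lp (fun _ : Γ => ℝ) p)) ⊆ A ∪ {0})) :=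
  stmt9_general p Γ i₀ i₁ hi E hE 𝒜 h𝒜disj h𝒜card h𝒜cover A hA
end

section
/- Let 1 ≤ p, q < ∞ and let A = {T ∈ L(ℓ^p; ℓ^q) : T is not injective}. Then A is (1, 𝔠)-lineable in L(ℓ^p; ℓ^q): for every nonzero non-injective bounded linear operator T: ℓ^p → ℓ^q there exists a subspace S of L(ℓ^p; ℓ^q) of dimension 𝔠 with T ∈ S and every nonzero element of S non-injective. -/
open scoped ENNReal
open Cardinal

noncomputable section Stmt12Aux

variable (p q : ℝ≥0∞) [Fact (1 ≤ p)] [Fact (1 ≤ q)]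

private theorem p_ne_zero : p ≠ 0 :=
  (lt_of_lt_of_le zero_lt_one (Fact.out : (1 : ℝ≥0∞) ≤ p)).ne'

/-- Coordinate evaluation as a continuous linear functional on `lp`. -/
private def coordF (k : ℕ) : lp (fun _ : ℕ => ℝ) p →L[ℝ] ℝ :=
  LinearMap.mkContinuous
    { toFun := fun f => f k
      map_add' := fun f g => congrFun (lp.coeFn_add f g) k
      map_smul' := fun c f => congrFun (lp.coeFn_smul c f) k }
    1 (fun f => by simpa using lp.norm_apply_le_norm (p_ne_zero p) f k)

private theorem coordF_apply (k : ℕ) (f : lp (fun _ : ℕ => ℝ) p) : coordF p k f = f k := rfl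

/-- The coercion of `lp` into functions, as a linear map. -/
private def coeL : lp (fun _ : ℕ => ℝ) q →ₗ[ℝ] (ℕ → ℝ) where
  toFun f := f
  map_add' := lp.coeFn_add
  map_smul' := lp.coeFn_smul

/-- The shift operator on sequences. -/
private def shiftE : Module.End ℝ (ℕ → ℝ) where
  toFun f := fun n => f (n + 1)
  map_add' _ _ := rfl
  map_smul' _ _ := rfl

private theorem memℓp_geom (hq : q ≠ ⊤) {r : ℝ} (hr : r ∈ Set.Ioo (0 : ℝ) 1) :
    Memℓp (fun n : ℕ => r ^ n) q := by
  have hq0 : q ≠ 0 := p_ne_zero q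
  have hqt : 0 < q.toReal := ENNReal.toReal_pos hq0 hq
  apply memℓp_gen
  have hs : Summable (fun n : ℕ => (r ^ q.toReal) ^ n) :=
    summable_geometric_of_lt_one (Real.rpow_nonneg hr.1.le _)
      (Real.rpow_lt_one hr.1.le hr.2 hqt)
  refine hs.congr fun n => ?_
  have h1 : ‖r ^ n‖ = r ^ n := by
    rw [Real.norm_eq_abs, abs_of_pos (pow_pos hr.1 n)]
  rw [h1, ← Real.rpow_natCast r n, ← Real.rpow_natCast (r ^ q.toReal) n,
    ← Real.rpow_mul hr.1.le, ← Real.rpow_mul hr.1.le, mul_comm]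

/-- Geometric sequences as elements of `lp`. -/
private def geomSeq (hq : q ≠ ⊤) (r : Set.Ioo (0 : ℝ) 1) : lp (fun _ : ℕ => ℝ) q :=
  ⟨fun n => (r : ℝ) ^ n, memℓp_geom q hq r.2⟩

private theorem coe_geomSeq (hq : q ≠ ⊤) (r : Set.Ioo (0 : ℝ) 1) :
    (geomSeq q hq r : ℕ → ℝ) = fun n => (r : ℝ) ^ n := rfl

private theorem li_geomSeq (hq : q ≠ ⊤) :
    LinearIndependent ℝ (fun r : Set.Ioo (0 : ℝ) 1 => geomSeq q hq r) := by
  apply LinearIndependent.of_comp (coeL q)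
  have key := shiftE.eigenvectors_linearIndependent'
    (fun r : Set.Ioo (0 : ℝ) 1 => (r : ℝ)) Subtype.coe_injective
    (fun r : Set.Ioo (0 : ℝ) 1 => fun n => (r : ℝ) ^ n) ?_
  · exact key
  · intro r
    constructor
    · rw [Module.End.mem_eigenspace_iff]
      funext n
      show (r : ℝ) ^ (n + 1) = (r : ℝ) * (r : ℝ) ^ n
      rw [pow_succ, mul_comm]
    · intro h
      have := congrFun h 0
      simp at this

end Stmt12Aux

set_option maxHeartbeats 1000000 in
/-- Let `1 ≤ p, q < ∞`.  The set of non-injective bounded linear operators from `ℓ^p` to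
`ℓ^q` is `(1, 𝔠)`-lineable: for every nonzero non-injective bounded operator
`T : ℓ^p → ℓ^q` there is a subspace `S` of `L(ℓ^p; ℓ^q)` of dimension `𝔠` with `T ∈ S`
whose nonzero elements are all non-injective. -/
theorem stmt12 (p q : ℝ≥0∞) [Fact (1 ≤ p)] [Fact (1 ≤ q)] (hp : p ≠ ⊤) (hq : q ≠ ⊤)
    (T : lp (fun _ : ℕ => ℝ) p →L[ℝ] lp (fun _ : ℕ => ℝ) q)
    (hT : T ≠ 0) (hTni : ¬ Function.Injective T) :
    ∃ S : Submodule ℝ (lp (fun _ : ℕ => ℝ) p →L[ℝ] lp (fun _ : ℕ => ℝ) q),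
      Module.rank ℝ S = Cardinal.continuum ∧ T ∈ S ∧
      ∀ U ∈ S, U ≠ 0 → ¬ Function.Injective U := by
  classical
  rw [Function.not_injective_iff] at hTni
  obtain ⟨a, b, hab, hne⟩ := hTni
  set x : lp (fun _ : ℕ => ℝ) p := a - b with hxdef
  have hx0 : x ≠ 0 := sub_ne_zero.mpr hne
  have hTx : T x = 0 := by rw [hxdef, map_sub, hab, sub_self]
  -- evaluation at x, as a linear map on the operator space
  let ev : (lp (fun _ : ℕ => ℝ) p →L[ℝ] lp (fun _ : ℕ => ℝ) q) →ₗ[ℝ] lp (fun _ : ℕ => ℝ) q :=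
    { toFun := fun U => U x
      map_add' := fun U V => rfl
      map_smul' := fun c U => rfl }
  refine ⟨LinearMap.ker ev, ?_, by simpa [ev, LinearMap.mem_ker] using hTx, ?_⟩
  · -- rank computation
    apply le_antisymm
    · -- upper bound
      have hinj : Function.Injective
          (fun (U : lp (fun _ : ℕ => ℝ) p →L[ℝ] lp (fun _ : ℕ => ℝ) q) =>
            fun n : ℕ => U (lp.single p n 1)) := by
        intro U V h
        refine ContinuousLinearMap.ext fun g => ?_
        have hU := (lp.hasSum_single hp g).mapL U
        have hV := (lp.hasSum_single hp g).mapL V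
        refine hU.unique ?_
        have hfun : ∀ n, U (lp.single p n ((g : ℕ → ℝ) n)) = V (lp.single p n ((g : ℕ → ℝ) n)) := by
          intro n
          have h1 : lp.single p n ((g : ℕ → ℝ) n)
              = ((g : ℕ → ℝ) n) • (lp.single p n 1 : lp (fun _ : ℕ => ℝ) p) := by
            rw [← lp.single_smul]
            norm_num
          rw [h1, map_smul, map_smul]
          exact congrArg (fun z => (g : ℕ → ℝ) n • z) (congrFun h n)
        rwa [funext hfun]
      have hcq : #(lp (fun _ : ℕ => ℝ) q) ≤ Cardinal.continuum := by
        have hinj2 : Function.Injective (fun v : lp (fun _ : ℕ => ℝ) q => (v : ℕ → ℝ)) :=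
          fun _ _ h => lp.ext h
        calc #(lp (fun _ : ℕ => ℝ) q) ≤ #(ℕ → ℝ) := Cardinal.mk_le_of_injective hinj2
          _ = (#ℝ) ^ (ℵ₀ : Cardinal) := by simp [Cardinal.mk_arrow]
          _ = Cardinal.continuum := by
            rw [Cardinal.mk_real, Cardinal.continuum_power_aleph0]
      have hcard : #(lp (fun _ : ℕ => ℝ) p →L[ℝ] lp (fun _ : ℕ => ℝ) q) ≤ Cardinal.continuum :=
        calc #(lp (fun _ : ℕ => ℝ) p →L[ℝ] lp (fun _ : ℕ => ℝ) q)
            ≤ #(ℕ → lp (fun _ : ℕ => ℝ) q) := Cardinal.mk_le_of_injective hinj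
          _ = #(lp (fun _ : ℕ => ℝ) q) ^ (ℵ₀ : Cardinal) := by simp [Cardinal.mk_arrow]
          _ ≤ Cardinal.continuum ^ (ℵ₀ : Cardinal) := Cardinal.power_le_power_right hcq
          _ = Cardinal.continuum := Cardinal.continuum_power_aleph0
      calc Module.rank ℝ (LinearMap.ker ev) ≤ #(LinearMap.ker ev) := rank_le_card _ _
        _ ≤ #(lp (fun _ : ℕ => ℝ) p →L[ℝ] lp (fun _ : ℕ => ℝ) q) := Cardinal.mk_subtype_le _
        _ ≤ Cardinal.continuum := hcard
    · -- lower bound: need a nonzero functional vanishing at x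
      obtain ⟨i, hi⟩ : ∃ i, (x : ℕ → ℝ) i ≠ 0 := by
        by_contra h
        push_neg at h
        exact hx0 (lp.ext (funext h))
      have hij : (i + 1) ≠ i := Nat.succ_ne_self i
      set f : lp (fun _ : ℕ => ℝ) p →L[ℝ] ℝ :=
        (x : ℕ → ℝ) i • coordF p (i + 1) - (x : ℕ → ℝ) (i + 1) • coordF p i with hfdef
      have hfx : f x = 0 := by
        simp only [hfdef, ContinuousLinearMap.sub_apply, ContinuousLinearMap.smul_apply,
          coordF_apply, smul_eq_mul]
        ring
      have e1 : (lp.single p (i + 1) (1 : ℝ) : ∀ _ : ℕ, ℝ) (i + 1) = 1 :=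
        lp.single_apply_self (E := fun _ : ℕ => ℝ) p (i + 1) (1 : ℝ)
      have e2 : (lp.single p (i + 1) (1 : ℝ) : ∀ _ : ℕ, ℝ) i = 0 :=
        lp.single_apply_ne (E := fun _ : ℕ => ℝ) p (i + 1) (1 : ℝ) (Ne.symm hij)
      have hfy : f (lp.single p (i + 1) 1) ≠ 0 := by
        simp only [hfdef, ContinuousLinearMap.sub_apply, ContinuousLinearMap.smul_apply,
          coordF_apply, smul_eq_mul, e1, e2]
        simpa using hi
      have hmem : ∀ r : Set.Ioo (0 : ℝ) 1,
          f.smulRight (geomSeq q hq r) ∈ LinearMap.ker ev := by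
        intro r
        simp only [LinearMap.mem_ker]
        show (f.smulRight (geomSeq q hq r)) x = 0
        rw [ContinuousLinearMap.smulRight_apply, hfx, zero_smul]
      let Φ : lp (fun _ : ℕ => ℝ) q →ₗ[ℝ]
          (lp (fun _ : ℕ => ℝ) p →L[ℝ] lp (fun _ : ℕ => ℝ) q) :=
        { toFun := fun v => f.smulRight v
          map_add' := fun v w => by
            refine ContinuousLinearMap.ext fun y => ?_
            rw [ContinuousLinearMap.smulRight_apply, ContinuousLinearMap.add_apply,
              ContinuousLinearMap.smulRight_apply, ContinuousLinearMap.smulRight_apply, smul_add]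
          map_smul' := fun c v => by
            refine ContinuousLinearMap.ext fun y => ?_
            rw [RingHom.id_apply, ContinuousLinearMap.smulRight_apply,
              ContinuousLinearMap.smul_apply, ContinuousLinearMap.smulRight_apply,
              smul_comm] }
      have hΦinj : LinearMap.ker Φ = ⊥ := by
        rw [LinearMap.ker_eq_bot']
        intro v hv
        have h3 : f (lp.single p (i + 1) 1) • v = 0 := by
          calc f (lp.single p (i + 1) 1) • v
              = (f.smulRight v) (lp.single p (i + 1) 1) :=
                (ContinuousLinearMap.smulRight_apply).symm
            _ = 0 := by
              show (Φ v) (lp.single p (i + 1) 1) = 0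
              rw [hv]
              rfl
        exact (smul_eq_zero.mp h3).resolve_left hfy
      have hli : LinearIndependent ℝ (fun r : Set.Ioo (0 : ℝ) 1 =>
          (⟨f.smulRight (geomSeq q hq r), hmem r⟩ : LinearMap.ker ev)) := by
        apply LinearIndependent.of_comp (LinearMap.ker ev).subtype
        exact (li_geomSeq q hq).map' Φ hΦinj
      have := hli.cardinal_le_rank
      rwa [Cardinal.mk_Ioo_real zero_lt_one] at this
  · intro U hU hU0 hUinj
    rw [LinearMap.mem_ker] at hU
    have hUx : U x = U 0 := by
      show ev U = U 0
      rw [hU, map_zero]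
    exact hx0 (hUinj hUx)
end

section
/- Let p > 0 and let x, y, z ∈ ℓ^p be linearly independent with span{x,y,z} \ {0} ⊆ ℓ^p \ ⋃_{0<q<p} ℓ^q. Then there exists an infinite subset O ⊆ ℕ with infinite complement containing {1,…,n₀} (where the first n₀ coordinates of x,y,z are linearly independent) such that: (i) the restrictions of x, y, z to ℕ\O each lie in ℓ^p \ ⋃_{0<q<p} ℓ^q, and (ii) the restrictions of x, y, z to O all lie in ℓ^q for every q > 0. Consequently, for every (a₀,a₁,a₂) ≠ 0 and every 0 < q < p, ‖(a₀x_j + a₁y_j + a₂z_j)_{j∉O}‖_q = ∞. -/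
open scoped Classical

/-- Let `p > 0` and let `x, y, z ∈ ℓ^p` be linearly independent with
`span {x,y,z} \ {0} ⊆ ℓ^p \ ⋃_{0<q<p} ℓ^q`, and let `n₀` be such that the first `n₀`
coordinates of `x, y, z` are linearly independent.  Then there is an infinite set
`O ⊆ ℕ` with infinite complement, disjoint from `{0,…,n₀-1}`, such that the restrictions
of `x, y, z` to `ℕ \ O` lie in `ℓ^p \ ⋃_{0<q<p} ℓ^q` while their restrictions to `O` lie
in `ℓ^q` for every `q > 0`; consequently for every `(a₀,a₁,a₂) ≠ 0` and `0 < q < p` the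
sequence `(a₀x_j + a₁y_j + a₂z_j)_{j ∉ O}` fails to be in `ℓ^q`. -/
theorem stmt18 (p : ℝ) (hp : 0 < p) (x y z : ℕ → ℝ)
    (hxp : MemSeqLp p x) (hyp : MemSeqLp p y) (hzp : MemSeqLp p z)
    (hli : LinearIndependent ℝ ![x, y, z])
    (hspan : ∀ w ∈ Submodule.span ℝ {x, y, z}, w ≠ 0 →
      MemSeqLp p w ∧ ∀ q : ℝ, 0 < q → q < p → ¬ MemSeqLp q w)
    (n₀ : ℕ)
    (hn₀ : LinearIndependent ℝ (fun i : Fin 3 => fun j : Fin n₀ => ![x, y, z] i j)) :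
    ∃ O : Set ℕ, O.Infinite ∧ Oᶜ.Infinite ∧ (∀ j < n₀, j ∉ O) ∧
      (∀ v ∈ ({x, y, z} : Set (ℕ → ℝ)),
        (MemSeqLp p (fun j => if j ∈ O then 0 else v j) ∧
          ∀ q : ℝ, 0 < q → q < p → ¬ MemSeqLp q (fun j => if j ∈ O then 0 else v j)) ∧
        ∀ q : ℝ, 0 < q → MemSeqLp q (fun j => if j ∈ O then v j else 0)) ∧
      ∀ a₀ a₁ a₂ : ℝ, (a₀, a₁, a₂) ≠ (0, 0, 0) → ∀ q : ℝ, 0 < q → q < p →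
        ¬ MemSeqLp q (fun j => if j ∈ O then 0 else a₀ * x j + a₁ * y j + a₂ * z j) := by
  -- coordinates tend to zero
  have habs : ∀ w : ℕ → ℝ, MemSeqLp p w → Filter.Tendsto (fun j => |w j|) Filter.atTop (nhds 0) := by
    intro w hw
    have h1 : Filter.Tendsto (fun j => |w j| ^ p) Filter.atTop (nhds 0) := hw.tendsto_atTop_zero
    have h2 : Filter.Tendsto (fun j => (|w j| ^ p) ^ p⁻¹) Filter.atTop (nhds ((0:ℝ) ^ p⁻¹)) :=
      h1.rpow_const (Or.inr (by positivity))
    have h3 : ((0:ℝ) ^ p⁻¹) = 0 := Real.zero_rpow (by positivity)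
    rw [h3] at h2
    convert h2 using 2 with j
    rw [Real.rpow_rpow_inv (abs_nonneg _) hp.ne']
  have hx0 := habs x hxp
  have hy0 := habs y hyp
  have hz0 := habs z hzp
  -- thresholds
  have hN : ∀ l : ℕ, ∃ N, ∀ j ≥ N, |x j| ≤ (1/2)^l ∧ |y j| ≤ (1/2)^l ∧ |z j| ≤ (1/2)^l := by
    intro l
    have hpos : (0:ℝ) < (1/2)^l := by positivity
    have ex := Filter.eventually_atTop.mp (hx0.eventually (ge_mem_nhds hpos))
    have ey := Filter.eventually_atTop.mp (hy0.eventually (ge_mem_nhds hpos))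
    have ez := Filter.eventually_atTop.mp (hz0.eventually (ge_mem_nhds hpos))
    obtain ⟨Nx, hNx⟩ := ex; obtain ⟨Ny, hNy⟩ := ey; obtain ⟨Nz, hNz⟩ := ez
    exact ⟨max Nx (max Ny Nz), fun j hj =>
      ⟨hNx j (le_trans (le_max_left _ _) hj),
       hNy j (le_trans (le_trans (le_max_left _ _) (le_max_right _ _)) hj),
       hNz j (le_trans (le_trans (le_max_right _ _) (le_max_right _ _)) hj)⟩⟩
  choose N hNs using hN
  -- the selection function
  set f : ℕ → ℕ := fun l => Nat.rec (max n₀ (N 0)) (fun l fl => max (fl + 2) (N (l+1))) l with hf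
  have hfsucc : ∀ l, f (l+1) = max (f l + 2) (N (l+1)) := fun l => rfl
  have hgap : ∀ l, f l + 2 ≤ f (l+1) := fun l => by rw [hfsucc]; exact le_max_left _ _
  have hmono : StrictMono f := strictMono_nat_of_lt_succ (fun l => by have := hgap l; omega)
  have hfN : ∀ l, N l ≤ f l := by
    intro l
    cases l with
    | zero => exact le_max_right _ _
    | succ m => rw [hfsucc]; exact le_max_right _ _
  have hfn₀ : ∀ l, n₀ ≤ f l := by
    intro l
    have h0 : n₀ ≤ f 0 := le_max_left _ _
    exact le_trans h0 (hmono.monotone (Nat.zero_le l))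
  have hbound : ∀ l, |x (f l)| ≤ (1/2)^l ∧ |y (f l)| ≤ (1/2)^l ∧ |z (f l)| ≤ (1/2)^l :=
    fun l => hNs l (f l) (hfN l)
  clear_value f
  clear hf hfsucc
  -- helper: summability on O of anything geometrically bounded along f
  have hOsum : ∀ (w : ℕ → ℝ) (C : ℝ), (∀ l, |w (f l)| ≤ C * (1/2)^l) → ∀ q : ℝ, 0 < q →
      Summable (fun j => |if j ∈ Set.range f then w j else 0| ^ q) := by
    intro w C hC q hq
    have hC0 : 0 ≤ C := by
      have h := hC 0
      simp only [pow_zero, mul_one] at h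
      exact (abs_nonneg _).trans h
    have hvan : ∀ j ∉ Set.range f, |if j ∈ Set.range f then w j else 0| ^ q = 0 := by
      intro j hj
      rw [if_neg hj, abs_zero, Real.zero_rpow hq.ne']
    have hsum1 : Summable (fun l : ℕ => |w (f l)| ^ q) := by
      refine Summable.of_nonneg_of_le (fun l => by positivity) (fun l => ?_)
        ((summable_geometric_of_lt_one (r := ((1:ℝ)/2) ^ q) (by positivity)
          (Real.rpow_lt_one (by norm_num) (by norm_num) hq)).mul_left (C ^ q))
      calc |w (f l)| ^ q ≤ (C * (1/2)^l) ^ q :=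
            Real.rpow_le_rpow (abs_nonneg _) (hC l) hq.le
        _ = C ^ q * (((1:ℝ)/2) ^ q) ^ l := by
            have hpow : (((1:ℝ)/2) ^ l) ^ q = (((1:ℝ)/2) ^ q) ^ l := by
              rw [← Real.rpow_natCast ((1:ℝ)/2) l, ← Real.rpow_natCast (((1:ℝ)/2) ^ q) l,
                ← Real.rpow_mul (by norm_num), ← Real.rpow_mul (by norm_num), mul_comm]
            rw [Real.mul_rpow hC0 (by positivity), hpow]
    have hce : ((fun j => |if j ∈ Set.range f then w j else 0| ^ q) ∘ f)
        = fun l : ℕ => |w (f l)| ^ q := by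
      funext l
      simp only [Function.comp_apply, if_pos (Set.mem_range_self l)]
    rw [← hmono.injective.summable_iff hvan, hce]
    exact hsum1
  -- helper: ℓ^p membership of the restriction to the complement
  have hcomp_p : ∀ w : ℕ → ℝ, MemSeqLp p w →
      MemSeqLp p (fun j => if j ∈ Set.range f then 0 else w j) := by
    intro w hw
    apply hw.of_nonneg_of_le (fun j => by positivity)
    intro j
    apply Real.rpow_le_rpow (abs_nonneg _) _ hp.le
    by_cases hj : j ∈ Set.range f <;> simp [hj, abs_nonneg]
  -- helper: splitting
  have hsplit : ∀ (w : ℕ → ℝ) (q : ℝ), 0 < q →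
      Summable (fun j => |if j ∈ Set.range f then w j else 0| ^ q) →
      Summable (fun j => |if j ∈ Set.range f then 0 else w j| ^ q) →
      MemSeqLp q w := by
    intro w q hq h1 h2
    refine (h1.add h2).congr fun j => ?_
    by_cases hj : j ∈ Set.range f <;>
      simp [hj, Real.zero_rpow hq.ne']
  -- helper: span membership
  have hwspan : ∀ a₀ a₁ a₂ : ℝ, (fun j => a₀ * x j + a₁ * y j + a₂ * z j)
      ∈ Submodule.span ℝ ({x, y, z} : Set (ℕ → ℝ)) := by
    intro a₀ a₁ a₂
    have hx' : x ∈ Submodule.span ℝ ({x, y, z} : Set (ℕ → ℝ)) := Submodule.subset_span (by simp)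
    have hy' : y ∈ Submodule.span ℝ ({x, y, z} : Set (ℕ → ℝ)) := Submodule.subset_span (by simp)
    have hz' : z ∈ Submodule.span ℝ ({x, y, z} : Set (ℕ → ℝ)) := Submodule.subset_span (by simp)
    have heq : (fun j => a₀ * x j + a₁ * y j + a₂ * z j) = a₀ • x + a₁ • y + a₂ • z := by
      funext j
      simp [Pi.add_apply, Pi.smul_apply, smul_eq_mul]
    rw [heq]
    exact Submodule.add_mem _ (Submodule.add_mem _ (Submodule.smul_mem _ _ hx')
      (Submodule.smul_mem _ _ hy')) (Submodule.smul_mem _ _ hz')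
  -- helper: nonvanishing of nontrivial combinations
  have hwne : ∀ a₀ a₁ a₂ : ℝ, (a₀, a₁, a₂) ≠ (0, 0, 0) →
      (fun j => a₀ * x j + a₁ * y j + a₂ * z j) ≠ (0 : ℕ → ℝ) := by
    intro a₀ a₁ a₂ ha hw
    apply ha
    have hsum : ∑ i : Fin 3, ![a₀, a₁, a₂] i • ![x, y, z] i = 0 := by
      rw [Fin.sum_univ_three]
      funext j
      have := congrFun hw j
      simp only [Pi.add_apply, Pi.smul_apply, smul_eq_mul, Matrix.cons_val_zero,
        Matrix.cons_val_one, Matrix.head_cons, Matrix.cons_val_two, Matrix.tail_cons,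
        Pi.zero_apply] at this ⊢
      linarith
    have h := Fintype.linearIndependent_iff.mp hli ![a₀, a₁, a₂] hsum
    have h0 := h 0
    have h1 := h 1
    have h2 := h 2
    simp only [Matrix.cons_val_zero, Matrix.cons_val_one, Matrix.head_cons,
      Matrix.cons_val_two, Matrix.tail_cons] at h0 h1 h2
    simp [Prod.ext_iff, h0, h1, h2]
  refine ⟨Set.range f, ?_, ?_, ?_, ?_, ?_⟩
  · exact Set.infinite_range_of_injective hmono.injective
  · -- complement infinite
    apply Set.infinite_of_injective_forall_mem (f := fun l => f l + 1)
    · intro a b hab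
      exact hmono.injective (by simpa using hab)
    · intro l
      simp only [Set.mem_compl_iff, Set.mem_range, not_exists]
      intro m hm
      rcases le_or_gt m l with h | h
      · have := hmono.monotone h; omega
      · have h2 : l + 1 ≤ m := h
        have := hmono.monotone h2
        have := hgap l
        omega
  · intro j hj hjO
    obtain ⟨l, rfl⟩ := hjO
    exact absurd (hfn₀ l) (by omega)
  · -- main part for v ∈ {x,y,z}
    intro v hv
    simp only [Set.mem_insert_iff, Set.mem_singleton_iff] at hv
    have hvmem : v ∈ Submodule.span ℝ ({x, y, z} : Set (ℕ → ℝ)) :=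
      Submodule.subset_span (by rcases hv with rfl | rfl | rfl <;> simp)
    have hvne : v ≠ 0 := by
      rcases hv with rfl | rfl | rfl
      · simpa using hli.ne_zero 0
      · simpa using hli.ne_zero 1
      · simpa using hli.ne_zero 2
    obtain ⟨hvp, hvq⟩ := hspan v hvmem hvne
    have hvO : ∀ q : ℝ, 0 < q →
        Summable (fun j => |if j ∈ Set.range f then v j else 0| ^ q) := by
      apply hOsum v 1
      intro l
      rw [one_mul]
      rcases hv with rfl | rfl | rfl
      · exact (hbound l).1
      · exact (hbound l).2.1
      · exact (hbound l).2.2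
    refine ⟨⟨hcomp_p v hvp, ?_⟩, fun q hq => hvO q hq⟩
    intro q hq hqp hcon
    exact hvq q hq hqp (hsplit v q hq (hvO q hq) hcon)
  · -- the consequence
    intro a₀ a₁ a₂ ha q hq hqp hcon
    set w : ℕ → ℝ := fun j => a₀ * x j + a₁ * y j + a₂ * z j with hwdef
    have hwO : Summable (fun j => |if j ∈ Set.range f then w j else 0| ^ q) := by
      apply hOsum w (|a₀| + |a₁| + |a₂|) _ q hq
      intro l
      obtain ⟨hbx, hby, hbz⟩ := hbound l
      have h1 : |w (f l)| ≤ |a₀ * x (f l)| + |a₁ * y (f l)| + |a₂ * z (f l)| :=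
        abs_add_three _ _ _
      rw [abs_mul, abs_mul, abs_mul] at h1
      calc |w (f l)| ≤ |a₀| * |x (f l)| + |a₁| * |y (f l)| + |a₂| * |z (f l)| := h1
        _ ≤ |a₀| * (1/2)^l + |a₁| * (1/2)^l + |a₂| * (1/2)^l :=
            add_le_add (add_le_add (mul_le_mul_of_nonneg_left hbx (abs_nonneg _))
              (mul_le_mul_of_nonneg_left hby (abs_nonneg _)))
              (mul_le_mul_of_nonneg_left hbz (abs_nonneg _))
        _ = (|a₀| + |a₁| + |a₂|) * (1/2)^l := by ring
    exact (hspan w (hwspan a₀ a₁ a₂) (hwne a₀ a₁ a₂ ha)).2 q hq hqp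
      (hsplit w q hq hwO hcon)
end
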